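/- arXiv:2105.05000 — 5 statements merged into one kernel-verified Lean document; each statement's English description precedes it below -/
import Mathlib

section
/- Let m ∈ ℕ, α > 0, p ∈ ℝ, C > 0, and for each N ∈ ℕ let f_N : ℝ^m → [0,∞) be a measurable function with f_N(u) ≤ (C·max(‖u‖,1))^N for all u ∈ ℝ^m. Then lim_{R→∞} limsup_{N→∞} (1/N) log ∫_{{u∈ℝ^m : ‖u‖ > R}} e^{−(N+p)·α·‖u‖²} f_N(u) du = −∞; that is, for every T > 0 there exists R₀ such that for all R ≥ R₀, limsup_{N→∞} (1/N) log ∫_{‖u‖>R} e^{−(N+p)·α·‖u‖²} f_N(u) du ≤ −T. -/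
open MeasureTheory Filter Real
open scoped ENNReal

/-- If `0 ≤ f_N(u) ≤ (C max(‖u‖,1))^N`, then
`lim_{R→∞} limsup_N (1/N) log ∫_{‖u‖>R} e^{−(N+p)α‖u‖²} f_N(u) du = −∞`:
for every `T > 0` there is `R₀` such that for all `R ≥ R₀`, eventually in `N` the integral
is at most `e^{−TN}`. -/
theorem restrict_to_compacts
    (m : ℕ) (α p C : ℝ) (hα : 0 < α) (hC : 0 < C)
    (f : ℕ → EuclideanSpace ℝ (Fin m) → ℝ)
    (hmeas : ∀ N, Measurable (f N))
    (hnonneg : ∀ N u, 0 ≤ f N u)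
    (hbound : ∀ N u, f N u ≤ (C * max ‖u‖ 1) ^ N) :
    ∀ T : ℝ, 0 < T → ∃ R₀ : ℝ, ∀ R : ℝ, R₀ ≤ R →
      ∀ᶠ N : ℕ in atTop,
        ∫⁻ u in {u : EuclideanSpace ℝ (Fin m) | R < ‖u‖},
            ENNReal.ofReal (Real.exp (-((N : ℝ) + p) * α * ‖u‖ ^ 2) * f N u) ∂volume
          ≤ ENNReal.ofReal (Real.exp (-T * N)) := by
  intro T hT
  have hb : (0 : ℝ) < α / 4 := by linarith
  -- integrability of the Gaussian `exp (-(α/4) ‖v‖²)`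
  have hint : Integrable (fun v : EuclideanSpace ℝ (Fin m) => rexp (-(α / 4) * ‖v‖ ^ 2)) := by
    have h := (GaussianFourier.integrable_cexp_neg_mul_sq_norm_add (V := EuclideanSpace ℝ (Fin m))
      (b := ((α / 4 : ℝ) : ℂ)) (by simpa using hb) 0 (0 : EuclideanSpace ℝ (Fin m))).norm
    simpa [Complex.norm_exp, ← Complex.ofReal_pow] using h
  set I : ℝ≥0∞ := ∫⁻ v : EuclideanSpace ℝ (Fin m), ENNReal.ofReal (rexp (-(α / 4) * ‖v‖ ^ 2))
    with hI
  have hIlt : I < ⊤ := hint.lintegral_lt_top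
  -- choose `R₁` such that the key pointwise bound holds for `t ≥ R₁`
  have h0 : Tendsto (fun t : ℝ => C * (t * rexp (-(α / 4) * t ^ 2))) atTop (nhds 0) := by
    have hlo := rpow_mul_exp_neg_mul_sq_isLittleO_exp_neg hb 1
    have haux : Tendsto (fun t : ℝ => rexp (-(1 / 2) * t)) atTop (nhds 0) := by
      have hg : Tendsto (fun t : ℝ => (1 / 2 : ℝ) * t) atTop atTop :=
        tendsto_id.const_mul_atTop (by norm_num)
      simpa [Function.comp_def, neg_mul] using tendsto_exp_neg_atTop_nhds_zero.comp hg
    have h2 : Tendsto (fun t : ℝ => t ^ (1 : ℝ) * rexp (-(α / 4) * t ^ 2)) atTop (nhds 0) :=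
      hlo.isBigO.trans_tendsto haux
    have h3 : Tendsto (fun t : ℝ => t * rexp (-(α / 4) * t ^ 2)) atTop (nhds 0) := by
      refine h2.congr' ?_
      filter_upwards [eventually_ge_atTop (0 : ℝ)] with t ht
      rw [Real.rpow_one]
    simpa using h3.const_mul C
  have h1 : ∀ᶠ t : ℝ in atTop, C * (t * rexp (-(α / 4) * t ^ 2)) < rexp (-(T + 1)) :=
    h0.eventually_lt_const (exp_pos _)
  obtain ⟨R₁, hR₁⟩ := h1.exists_forall_of_atTop
  refine ⟨max R₁ 1, fun R hR => ?_⟩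
  have hR1 : (1 : ℝ) ≤ R := le_trans (le_max_right _ _) hR
  -- pick a real bound `M` for `I`
  obtain ⟨M, hM⟩ : ∃ M : ℝ, I ≤ ENNReal.ofReal M ∧ 0 ≤ M := by
    refine ⟨I.toReal, le_of_eq (ENNReal.ofReal_toReal hIlt.ne).symm, ENNReal.toReal_nonneg⟩
  obtain ⟨hM1, hM2⟩ := hM
  -- conditions on N
  have hev1 : ∀ᶠ N : ℕ in atTop, (1 : ℕ) ≤ N := eventually_ge_atTop 1
  have hev2 : ∀ᶠ N : ℕ in atTop, -2 * p ≤ (N : ℝ) :=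
    (tendsto_natCast_atTop_atTop (R := ℝ)).eventually_ge_atTop _
  have hev3 : ∀ᶠ N : ℕ in atTop, rexp (-(N : ℝ)) * M ≤ 1 := by
    have : Tendsto (fun N : ℕ => rexp (-(N : ℝ)) * M) atTop (nhds (0 * M)) :=
      (tendsto_exp_neg_atTop_nhds_zero.comp (tendsto_natCast_atTop_atTop (R := ℝ))).mul_const M
    rw [zero_mul] at this
    exact this.eventually_le_const zero_lt_one
  filter_upwards [hev1, hev2, hev3] with N hN1 hN2 hN3
  -- pointwise bound on the region `R < ‖u‖`
  have hptwise : ∀ u : EuclideanSpace ℝ (Fin m), R < ‖u‖ →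
      rexp (-((N : ℝ) + p) * α * ‖u‖ ^ 2) * f N u ≤
        (rexp (-T * N) * rexp (-(N : ℝ))) * rexp (-(α / 4) * ‖u‖ ^ 2) := by
    intro u hu
    set t := ‖u‖ with ht
    have ht1 : (1 : ℝ) ≤ t := le_trans hR1 hu.le
    have ht0 : (0 : ℝ) ≤ t := by linarith
    have hfb : f N u ≤ (C * t) ^ N := by
      have := hbound N u
      rwa [max_eq_left ht1] at this
    have hCt0 : (0 : ℝ) ≤ C * t := by positivity
    have hexp1 : rexp (-((N : ℝ) + p) * α * t ^ 2) ≤ rexp (-((N : ℝ) / 2) * α * t ^ 2) := by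
      apply exp_le_exp.2
      have ht2 : (0 : ℝ) ≤ t ^ 2 := sq_nonneg t
      nlinarith [mul_nonneg hα.le ht2]
    have step1 : rexp (-((N : ℝ) + p) * α * t ^ 2) * f N u ≤
        (C * t * rexp (-(α / 2) * t ^ 2)) ^ N := by
      have : rexp (-((N : ℝ) / 2) * α * t ^ 2) = rexp (-(α / 2) * t ^ 2) ^ N := by
        rw [← Real.exp_nat_mul]; ring_nf
      calc rexp (-((N : ℝ) + p) * α * t ^ 2) * f N u
          ≤ rexp (-((N : ℝ) / 2) * α * t ^ 2) * (C * t) ^ N :=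
            mul_le_mul hexp1 hfb (hnonneg N u) (exp_pos _).le
        _ = (C * t * rexp (-(α / 2) * t ^ 2)) ^ N := by
            rw [this, mul_pow]; ring
    have hkey : C * t * rexp (-(α / 2) * t ^ 2) ≤ rexp (-(T + 1)) * rexp (-(α / 4) * t ^ 2) := by
      have htR₁ : R₁ ≤ t := le_trans (le_trans (le_max_left _ _) hR) hu.le
      have h := (hR₁ t htR₁).le
      have hsplit : rexp (-(α / 2) * t ^ 2) = rexp (-(α / 4) * t ^ 2) * rexp (-(α / 4) * t ^ 2) := by
        rw [← Real.exp_add]; ring_nf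
      calc C * t * rexp (-(α / 2) * t ^ 2)
          = (C * (t * rexp (-(α / 4) * t ^ 2))) * rexp (-(α / 4) * t ^ 2) := by
            rw [hsplit]; ring
        _ ≤ rexp (-(T + 1)) * rexp (-(α / 4) * t ^ 2) :=
            mul_le_mul_of_nonneg_right h (exp_pos _).le
    have step2 : (C * t * rexp (-(α / 2) * t ^ 2)) ^ N ≤
        (rexp (-(T + 1)) * rexp (-(α / 4) * t ^ 2)) ^ N :=
      pow_le_pow_left₀ (by positivity) hkey N
    have step3 : (rexp (-(T + 1)) * rexp (-(α / 4) * t ^ 2)) ^ N ≤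
        (rexp (-T * N) * rexp (-(N : ℝ))) * rexp (-(α / 4) * t ^ 2) := by
      rw [mul_pow, ← Real.exp_nat_mul, ← Real.exp_nat_mul, ← Real.exp_add, ← Real.exp_add,
        ← Real.exp_add]
      apply exp_le_exp.2
      have ht2 : (0 : ℝ) ≤ t ^ 2 := sq_nonneg t
      have hN1' : (1 : ℝ) ≤ (N : ℝ) := by exact_mod_cast hN1
      nlinarith [mul_nonneg hα.le ht2]
    linarith
  -- integrate the pointwise bound
  have hSmeas : MeasurableSet {u : EuclideanSpace ℝ (Fin m) | R < ‖u‖} :=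
    (isOpen_lt continuous_const continuous_norm).measurableSet
  set c : ℝ := rexp (-T * N) * rexp (-(N : ℝ)) with hc
  calc ∫⁻ u in {u : EuclideanSpace ℝ (Fin m) | R < ‖u‖},
          ENNReal.ofReal (rexp (-((N : ℝ) + p) * α * ‖u‖ ^ 2) * f N u) ∂volume
      ≤ ∫⁻ u in {u : EuclideanSpace ℝ (Fin m) | R < ‖u‖},
          ENNReal.ofReal (c * rexp (-(α / 4) * ‖u‖ ^ 2)) ∂volume := by
        refine setLIntegral_mono' hSmeas fun u hu => ?_
        exact ENNReal.ofReal_le_ofReal (hptwise u hu)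
    _ = ENNReal.ofReal c * ∫⁻ u in {u : EuclideanSpace ℝ (Fin m) | R < ‖u‖},
          ENNReal.ofReal (rexp (-(α / 4) * ‖u‖ ^ 2)) ∂volume := by
        simp_rw [ENNReal.ofReal_mul (by positivity : (0:ℝ) ≤ c)]
        rw [lintegral_const_mul' _ _ ENNReal.ofReal_ne_top]
    _ ≤ ENNReal.ofReal c * I := by
        gcongr
        exact setLIntegral_le_lintegral _ _
    _ ≤ ENNReal.ofReal (rexp (-T * N)) * (ENNReal.ofReal (rexp (-(N : ℝ))) * ENNReal.ofReal M) := by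
        rw [hc, ENNReal.ofReal_mul (exp_pos _).le, mul_assoc]
        gcongr
    _ ≤ ENNReal.ofReal (rexp (-T * N)) := by
        rw [← ENNReal.ofReal_mul (exp_pos _).le]
        calc ENNReal.ofReal (rexp (-T * N)) * ENNReal.ofReal (rexp (-(N : ℝ)) * M)
            ≤ ENNReal.ofReal (rexp (-T * N)) * 1 := by
              gcongr
              exact ENNReal.ofReal_le_one.2 hN3
          _ = ENNReal.ofReal (rexp (-T * N)) := mul_one _
end

section
/- Fix E ∈ ℝ. For each N let H_N be a random N×N real symmetric matrix and let η_N > 0 be a deterministic sequence tending to zero. For j ∈ {1,…,N}, let H^{(j)} be the (N−1)×(N−1) matrix obtained from H_N by deleting row j and column j, and let h_j ∈ ℝ^{N−1} be the j-th column of H_N with the entry (H_N)_{jj} removed; for η > 0 the complex matrix H^{(j)} − (E + iη)·Id is invertible since H^{(j)} is real symmetric. Assume that N·η_N · sup_{1≤j≤N} E[ Im( 1/((H_N)_{jj} − (E + i·η_N + h_jᵀ·(H^{(j)} − (E + i·η_N)·Id)^{−1}·h_j)) ) ] → 0 as N → ∞. Then lim_{N→∞} P(H_N has no eigenvalues in [E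 − η_N, E + η_N]) = 1. -/
open MeasureTheory ProbabilityTheory Real Filter
open scoped ENNReal

/-- The eigenvalues of a real symmetric matrix (junk value `0` if not symmetric). -/
noncomputable def eigs {N : ℕ} (M : Matrix (Fin N) (Fin N) ℝ) : Fin N → ℝ :=
  if h : M.IsHermitian then h.eigenvalues else 0

/-- The complex matrix `H^{(j)} − z·Id`, where `H^{(j)}` is obtained from `M` by deleting
row `j` and column `j`. -/
noncomputable def minorShift {N : ℕ} (M : Matrix (Fin N) (Fin N) ℝ) (j : Fin N) (z : ℂ) :
    Matrix {i : Fin N // i ≠ j} {i : Fin N // i ≠ j} ℂ :=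
  (Matrix.of fun a b : {i : Fin N // i ≠ j} => (M a.1 b.1 : ℂ)) - z • 1

/-- The Schur-complement quadratic form `h_jᵀ (H^{(j)} − z)⁻¹ h_j`, where `h_j` is the `j`-th
column of `M` with the `j`-th entry removed. -/
noncomputable def schurQuad {N : ℕ} (M : Matrix (Fin N) (Fin N) ℝ) (j : Fin N) (z : ℂ) : ℂ :=
  ∑ a : {i : Fin N // i ≠ j}, ∑ b : {i : Fin N // i ≠ j},
    (M a.1 j : ℂ) * (minorShift M j z)⁻¹ a b * (M b.1 j : ℂ)

section Aux
open Matrix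
noncomputable section
variable {n : Type*} [Fintype n] [DecidableEq n]

lemma herm_resolvent (M : Matrix n n ℝ) (hM : M.IsHermitian) (z : ℂ) (hz : z.im ≠ 0) :
    ∃ U : Matrix n n ℂ,
      U * star U = 1 ∧ star U * U = 1 ∧ (∀ a k, star (U a k) = U a k) ∧
      (M.map Complex.ofReal - z • 1)⁻¹ =
        U * Matrix.diagonal (fun k => ((hM.eigenvalues k : ℂ) - z)⁻¹) * star U ∧
      (M.map Complex.ofReal - z • 1) * (M.map Complex.ofReal - z • 1)⁻¹ = 1 := by
  classical
  set U₀ : Matrix n n ℝ := (hM.eigenvectorUnitary : Matrix n n ℝ) with hU₀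
  set U : Matrix n n ℂ := U₀.map Complex.ofRealHom with hU
  have hstar : star U = (star U₀).map Complex.ofRealHom := by
    rw [hU]
    exact (Matrix.conjTranspose_map (A := U₀) Complex.ofRealHom
      (fun x => by simp [Complex.conj_ofReal])).symm
  have h1 : U * star U = 1 := by
    rw [hstar, hU, ← Matrix.map_mul,
      (Matrix.mem_unitaryGroup_iff).mp hM.eigenvectorUnitary.2]
    simp
  have h2 : star U * U = 1 := by
    rw [hstar, hU, ← Matrix.map_mul,
      (Matrix.mem_unitaryGroup_iff').mp hM.eigenvectorUnitary.2]
    simp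
  have hreal : ∀ a k, star (U a k) = U a k := by
    intro a k; simp [hU, Matrix.map_apply, Complex.conj_ofReal]
  have hd : ∀ k, ((hM.eigenvalues k : ℂ) - z) ≠ 0 := by
    intro k h
    apply hz
    have := congrArg Complex.im h
    simpa using this.symm
  -- decomposition over ℂ
  have hdecomp : M.map Complex.ofReal - z • 1 =
      U * Matrix.diagonal (fun k => (hM.eigenvalues k : ℂ) - z) * star U := by
    have hspec := hM.spectral_theorem
    have : M.map Complex.ofReal = U * Matrix.diagonal (fun k => (hM.eigenvalues k : ℂ)) * star U := by
      calc M.map Complex.ofReal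
          = ((hM.eigenvectorUnitary : Matrix n n ℝ) * Matrix.diagonal (RCLike.ofReal ∘ hM.eigenvalues)
            * star (hM.eigenvectorUnitary : Matrix n n ℝ)).map Complex.ofRealHom := by
            conv_lhs => rw [hspec]
            rfl
        _ = U * Matrix.diagonal (fun k => (hM.eigenvalues k : ℂ)) * star U := by
            rw [Matrix.map_mul, Matrix.map_mul, hstar, hU₀, Matrix.diagonal_map (by simp)]
            rfl
    rw [this]
    have hz1 : z • (1 : Matrix n n ℂ) = U * (z • (1 : Matrix n n ℂ)) * star U := by
      rw [Matrix.mul_smul, Matrix.mul_one, Matrix.smul_mul, h1]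
    rw [hz1, ← Matrix.sub_mul, ← Matrix.mul_sub]
    congr 1
    congr 1
    rw [Matrix.smul_one_eq_diagonal, Matrix.diagonal_sub]
  have hinv : (M.map Complex.ofReal - z • 1) *
      (U * Matrix.diagonal (fun k => ((hM.eigenvalues k : ℂ) - z)⁻¹) * star U) = 1 := by
    rw [hdecomp]
    calc U * Matrix.diagonal (fun k => (hM.eigenvalues k : ℂ) - z) * star U *
          (U * Matrix.diagonal (fun k => ((hM.eigenvalues k : ℂ) - z)⁻¹) * star U)
        = U * (Matrix.diagonal (fun k => (hM.eigenvalues k : ℂ) - z) * ((star U * U) *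
            Matrix.diagonal (fun k => ((hM.eigenvalues k : ℂ) - z)⁻¹))) * star U := by
          simp only [Matrix.mul_assoc]
      _ = 1 := by
          rw [h2, Matrix.one_mul, Matrix.diagonal_mul_diagonal]
          have : (fun k => ((hM.eigenvalues k : ℂ) - z) * ((hM.eigenvalues k : ℂ) - z)⁻¹)
              = fun _ => (1 : ℂ) := by
            funext k; exact mul_inv_cancel₀ (hd k)
          rw [this, Matrix.diagonal_one, Matrix.mul_one, h1]
  have heq := Matrix.inv_eq_right_inv hinv
  exact ⟨U, h1, h2, hreal, heq, by rw [heq]; exact hinv⟩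

end
section
variable {n : Type*} [Fintype n] [DecidableEq n]

lemma herm_trace (M : Matrix n n ℝ) (hM : M.IsHermitian) (z : ℂ) (hz : z.im ≠ 0) :
    Matrix.trace (M.map Complex.ofReal - z • 1)⁻¹ = ∑ k, ((hM.eigenvalues k : ℂ) - z)⁻¹ := by
  obtain ⟨U, h1, h2, hreal, hinv, hprod⟩ := herm_resolvent M hM z hz
  rw [hinv, Matrix.trace_mul_cycle, h2, Matrix.one_mul, Matrix.trace_diagonal]

lemma herm_inv_mul (M : Matrix n n ℝ) (hM : M.IsHermitian) (z : ℂ) (hz : z.im ≠ 0) :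
    (M.map Complex.ofReal - z • 1) * (M.map Complex.ofReal - z • 1)⁻¹ = 1 := by
  obtain ⟨U, h1, h2, hreal, hinv, hprod⟩ := herm_resolvent M hM z hz
  exact hprod

lemma herm_quadform (M : Matrix n n ℝ) (hM : M.IsHermitian) (z : ℂ) (hz : z.im ≠ 0)
    (v : n → ℝ) :
    ∃ c : n → ℝ,
      (∑ a, ∑ b, (v a : ℂ) * (M.map Complex.ofReal - z • 1)⁻¹ a b * (v b))
        = ∑ k, (c k : ℂ) ^ 2 * ((hM.eigenvalues k : ℂ) - z)⁻¹ := by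
  obtain ⟨U, h1, h2, hreal, hinv, hprod⟩ := herm_resolvent M hM z hz
  refine ⟨fun k => ∑ a, v a * (U a k).re, ?_⟩
  rw [hinv]
  have hentry : ∀ a b, (U * Matrix.diagonal (fun k => ((hM.eigenvalues k : ℂ) - z)⁻¹) * star U) a b
      = ∑ k, U a k * ((hM.eigenvalues k : ℂ) - z)⁻¹ * U b k := by
    intro a b
    rw [Matrix.mul_apply]
    congr 1; funext k
    rw [Matrix.mul_apply, Finset.sum_mul]
    rw [Finset.sum_eq_single k]
    · simp only [Matrix.diagonal_apply_eq, Matrix.star_apply, hreal]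
    · intro l _ hl; simp [Matrix.diagonal_apply_ne _ hl]
    · simp
  have hUre : ∀ a k, (U a k : ℂ) = ((U a k).re : ℂ) := by
    intro a k
    have := hreal a k
    rw [Complex.ext_iff]
    refine ⟨by simp, ?_⟩
    simp only [Complex.ofReal_im]
    have him := congrArg Complex.im this
    simp only [Complex.star_def, Complex.conj_im] at him
    linarith
  calc ∑ a, ∑ b, (v a : ℂ) * (U * Matrix.diagonal (fun k => ((hM.eigenvalues k : ℂ) - z)⁻¹) * star U) a b * (v b)
      = ∑ a, ∑ b, ∑ k, ((v a : ℂ) * ((U a k).re : ℂ)) * ((v b : ℂ) * ((U b k).re : ℂ)) * ((hM.eigenvalues k : ℂ) - z)⁻¹ := by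
        refine Finset.sum_congr rfl fun a _ => Finset.sum_congr rfl fun b _ => ?_
        rw [hentry, Finset.mul_sum, Finset.sum_mul]
        refine Finset.sum_congr rfl fun k _ => ?_
        rw [← hUre, ← hUre]; ring
    _ = ∑ a, ∑ k, ∑ b, ((v a : ℂ) * ((U a k).re : ℂ)) * ((v b : ℂ) * ((U b k).re : ℂ)) * ((hM.eigenvalues k : ℂ) - z)⁻¹ :=
        Finset.sum_congr rfl fun a _ => Finset.sum_comm
    _ = ∑ k, ∑ a, ∑ b, ((v a : ℂ) * ((U a k).re : ℂ)) * ((v b : ℂ) * ((U b k).re : ℂ)) * ((hM.eigenvalues k : ℂ) - z)⁻¹ :=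
        Finset.sum_comm
    _ = ∑ k, ((∑ a, v a * (U a k).re : ℝ) : ℂ) ^ 2 * ((hM.eigenvalues k : ℂ) - z)⁻¹ := by
        refine Finset.sum_congr rfl fun k _ => ?_
        rw [sq]
        push_cast
        rw [Finset.sum_mul_sum, Finset.sum_mul]
        refine Finset.sum_congr rfl fun a _ => ?_
        rw [Finset.sum_mul]
end

section Schur
variable {N : ℕ}

lemma minorShift_eq (M : Matrix (Fin N) (Fin N) ℝ) (j : Fin N) (z : ℂ) :
    minorShift M j z =
      (M.submatrix (Subtype.val : {i : Fin N // i ≠ j} → Fin N) Subtype.val).map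
        Complex.ofReal - z • 1 := rfl

/-- imaginary part of the Schur quadratic form is nonnegative. -/
lemma schurQuad_im_nonneg (M : Matrix (Fin N) (Fin N) ℝ) (hM : M.IsHermitian) (j : Fin N)
    (z : ℂ) (hz : 0 < z.im) : 0 ≤ (schurQuad M j z).im := by
  classical
  have hM' : (M.submatrix (Subtype.val : {i : Fin N // i ≠ j} → Fin N) Subtype.val).IsHermitian :=
    hM.submatrix _
  obtain ⟨c, hc⟩ := herm_quadform _ hM' z (ne_of_gt hz) (fun a => M a.1 j)
  rw [schurQuad, minorShift_eq]
  rw [hc, Complex.im_sum]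
  refine Finset.sum_nonneg fun k _ => ?_
  have h1 : ((c k : ℂ)^2 * ((hM'.eigenvalues k : ℂ) - z)⁻¹).im
      = (c k)^2 * (((hM'.eigenvalues k : ℂ) - z)⁻¹).im := by
    rw [show ((c k : ℂ))^2 = (((c k)^2 : ℝ) : ℂ) by push_cast; ring, Complex.im_ofReal_mul]
  rw [h1]
  apply mul_nonneg (sq_nonneg _)
  rw [Complex.inv_im]
  apply div_nonneg _ (Complex.normSq_nonneg _)
  simp [hz.le]

end Schur

section SchurDiag
variable {N : ℕ}

lemma schur_diag (M : Matrix (Fin N) (Fin N) ℝ) (hM : M.IsHermitian) (j : Fin N) (z : ℂ)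
    (hz : 0 < z.im) :
    (M.map Complex.ofReal - z • 1)⁻¹ j j
        = ((M j j : ℂ) - (z + schurQuad M j z))⁻¹ ∧
      ((M j j : ℂ) - (z + schurQuad M j z)).im ≤ -z.im := by
  classical
  set S : ℂ := (M j j : ℂ) - (z + schurQuad M j z) with hSdef
  -- imaginary part bound
  have hQ : 0 ≤ (schurQuad M j z).im := schurQuad_im_nonneg M hM j z hz
  have hSim : S.im ≤ -z.im := by
    rw [hSdef]
    simp only [Complex.sub_im, Complex.add_im, Complex.ofReal_im]
    linarith
  have hSne : S ≠ 0 := by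
    intro h
    rw [h] at hSim
    simp at hSim
    linarith
  refine ⟨?_, hSim⟩
  -- block decomposition
  set p : Fin N → Prop := fun i => i ≠ j with hp
  set e : {i // p i} ⊕ {i // ¬ p i} ≃ Fin N := Equiv.sumCompl p with he
  haveI huq : Unique {i // ¬ p i} :=
    ⟨⟨⟨j, not_not_intro rfl⟩⟩, fun x => Subtype.ext (not_not.mp x.2)⟩
  set x0 : {i // ¬ p i} := ⟨j, not_not_intro rfl⟩ with hx0
  set Ac : Matrix (Fin N) (Fin N) ℂ := M.map Complex.ofReal - z • 1 with hAc
  set A₁ : Matrix {i // p i} {i // p i} ℂ := minorShift M j z with hA₁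
  set B₁ : Matrix {i // p i} {i // ¬ p i} ℂ := Matrix.of fun a _ => (M a.1 j : ℂ) with hB₁
  set C₁ : Matrix {i // ¬ p i} {i // p i} ℂ := Matrix.of fun _ b => (M j b.1 : ℂ) with hC₁
  set D₁ : Matrix {i // ¬ p i} {i // ¬ p i} ℂ := Matrix.of fun _ _ => (M j j : ℂ) - z with hD₁
  have hM' : (M.submatrix (Subtype.val : {i // p i} → Fin N) Subtype.val).IsHermitian :=
    hM.submatrix _
  -- invertibility of the minor
  have hA₁inv : A₁ * A₁⁻¹ = 1 := by
    rw [hA₁, minorShift_eq]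
    exact herm_inv_mul _ hM' z (ne_of_gt hz)
  haveI instA : Invertible A₁ :=
    invertibleOfRightInverse A₁ _ hA₁inv
  have hinvOfA : ⅟A₁ = A₁⁻¹ := invOf_eq_nonsing_inv A₁
  -- blocks
  have hF : Ac.submatrix e e = Matrix.fromBlocks A₁ B₁ C₁ D₁ := by
    ext i k
    cases i with
    | inl a =>
      cases k with
      | inl b =>
        show Ac a.1 b.1 = A₁ a b
        rw [hAc, hA₁, minorShift_eq]
        simp only [Matrix.sub_apply, Matrix.smul_apply, Matrix.map_apply,
          Matrix.submatrix_apply, Matrix.one_apply, Subtype.ext_iff, smul_eq_mul]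
      | inr y =>
        show Ac a.1 y.1 = B₁ a y
        have hy : y.1 = j := not_not.mp y.2
        rw [hAc, hB₁]
        simp only [Matrix.sub_apply, Matrix.smul_apply, Matrix.map_apply, smul_eq_mul,
          Matrix.of_apply]
        rw [Matrix.one_apply_ne (by rw [hy]; exact a.2), hy]
        ring
    | inr x =>
      have hx : x.1 = j := not_not.mp x.2
      cases k with
      | inl b =>
        show Ac x.1 b.1 = C₁ x b
        rw [hAc, hC₁]
        simp only [Matrix.sub_apply, Matrix.smul_apply, Matrix.map_apply, smul_eq_mul,
          Matrix.of_apply]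
        rw [Matrix.one_apply_ne (by rw [hx]; exact (Ne.symm b.2)), hx]
        ring
      | inr y =>
        show Ac x.1 y.1 = D₁ x y
        have hy : y.1 = j := not_not.mp y.2
        rw [hAc, hD₁]
        simp only [Matrix.sub_apply, Matrix.smul_apply, Matrix.map_apply, smul_eq_mul,
          Matrix.of_apply]
        rw [hx, hy, Matrix.one_apply_eq]
        ring
  have hsym : ∀ a b : Fin N, M a b = M b a := fun a b => by
    have h := congrFun (congrFun hM.symm a) b
    rwa [Matrix.conjTranspose_apply, star_trivial] at h
  -- schur complement is the scalar S
  have hSC : D₁ - C₁ * ⅟A₁ * B₁ = Matrix.of fun _ _ => S := by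
    ext x y
    rw [hinvOfA]
    have hQ : (C₁ * A₁⁻¹ * B₁) x y = schurQuad M j z := by
      calc (C₁ * A₁⁻¹ * B₁) x y
          = ∑ b, (∑ a, (M a.1 j : ℂ) * A₁⁻¹ a b) * (M b.1 j : ℂ) := by
            rw [Matrix.mul_apply]
            refine Finset.sum_congr rfl fun b _ => ?_
            rw [Matrix.mul_apply, hB₁, hC₁]
            simp only [Matrix.of_apply]
            congr 1
            refine Finset.sum_congr rfl fun a _ => ?_
            rw [hsym j a.1]
        _ = ∑ b, ∑ a, (M a.1 j : ℂ) * A₁⁻¹ a b * (M b.1 j : ℂ) := by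
            refine Finset.sum_congr rfl fun b _ => ?_
            rw [Finset.sum_mul]
        _ = ∑ a, ∑ b, (M a.1 j : ℂ) * A₁⁻¹ a b * (M b.1 j : ℂ) := Finset.sum_comm
        _ = schurQuad M j z := by rw [schurQuad, hA₁]
    have hD : D₁ x y = (M j j : ℂ) - z := rfl
    rw [Matrix.sub_apply, hQ, hD, Matrix.of_apply, hSdef]
    ring
  have hmulSS : ∀ (s t : ℂ), s * t = 1 →
      (Matrix.of fun _ _ => s : Matrix {i // ¬ p i} {i // ¬ p i} ℂ) *
        (Matrix.of fun _ _ => t) = 1 := by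
    intro s t hst
    ext x y
    rw [Matrix.mul_apply, Finset.univ_unique, Finset.sum_singleton]
    have hxy : x = y := Subsingleton.elim x y
    subst hxy
    rw [Matrix.one_apply_eq]
    simpa using hst
  haveI instSm : Invertible (Matrix.of fun _ _ => S : Matrix {i // ¬ p i} {i // ¬ p i} ℂ) :=
    ⟨Matrix.of fun _ _ => S⁻¹, hmulSS _ _ (inv_mul_cancel₀ hSne), hmulSS _ _ (mul_inv_cancel₀ hSne)⟩
  haveI instS' : Invertible (D₁ - C₁ * ⅟A₁ * B₁) := instSm.copy _ hSC
  have hinvS' : ⅟(D₁ - C₁ * ⅟A₁ * B₁) = Matrix.of fun _ _ => S⁻¹ :=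
    invOf_eq_right_inv (by rw [hSC]; exact hmulSS _ _ (mul_inv_cancel₀ hSne))
  haveI instF : Invertible (Matrix.fromBlocks A₁ B₁ C₁ D₁) :=
    Matrix.fromBlocks₁₁Invertible A₁ B₁ C₁ D₁
  have hblock := Matrix.invOf_fromBlocks₁₁_eq A₁ B₁ C₁ D₁
  have h1 : Ac⁻¹ j j = (Ac⁻¹).submatrix e e (Sum.inr x0) (Sum.inr x0) := rfl
  have h2 : (Ac⁻¹).submatrix e e = (Matrix.fromBlocks A₁ B₁ C₁ D₁)⁻¹ := by
    rw [← hF, Matrix.inv_submatrix_equiv]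
  show Ac⁻¹ j j = S⁻¹
  rw [h1, h2, ← invOf_eq_nonsing_inv, hblock, Matrix.fromBlocks_apply₂₂, hinvS']
  rfl

end SchurDiag

section Count
variable {N : ℕ}

lemma im_inv_bounds (S : ℂ) {η : ℝ} (hη : 0 < η) (h : S.im ≤ -η) :
    0 ≤ (S⁻¹).im ∧ (S⁻¹).im ≤ 1/η := by
  have him : S.im < 0 := lt_of_le_of_lt h (by linarith)
  have hns : 0 < Complex.normSq S := by
    rw [Complex.normSq_pos]
    intro h0
    rw [h0] at him
    simp at him
  rw [Complex.inv_im]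
  constructor
  · apply div_nonneg (by linarith) hns.le
  · rw [div_le_div_iff₀ hns hη, Complex.normSq_apply]
    nlinarith [sq_nonneg S.re, mul_nonneg (by linarith : (0:ℝ) ≤ -S.im - η) (by linarith : (0:ℝ) ≤ -S.im)]

lemma eigs_eq (M : Matrix (Fin N) (Fin N) ℝ) (hM : M.IsHermitian) :
    eigs M = hM.eigenvalues := dif_pos hM

lemma count_bound (M : Matrix (Fin N) (Fin N) ℝ) (hM : M.IsHermitian) (E η : ℝ) (hη : 0 < η)
    (z : ℂ) (hzre : z.re = E) (hzim : z.im = η) :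
    ((Finset.univ.filter fun i => eigs M i ∈ Set.Icc (E - η) (E + η)).card : ℝ)
      ≤ 2 * η * ∑ j, (((M j j : ℂ) - (z + schurQuad M j z))⁻¹).im := by
  classical
  have hz : 0 < z.im := by rw [hzim]; exact hη
  set t : Fin N → ℝ := fun k => (((hM.eigenvalues k : ℂ) - z)⁻¹).im with ht
  have htn : ∀ k, 0 ≤ t k := by
    intro k
    rw [ht]
    simp only [Complex.inv_im]
    apply div_nonneg _ (Complex.normSq_nonneg _)
    simp [hzim, hη.le]
  have htb : ∀ k, eigs M k ∈ Set.Icc (E - η) (E + η) → 1/(2*η) ≤ t k := by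
    intro k hk
    rw [eigs_eq M hM] at hk
    obtain ⟨hk1, hk2⟩ := hk
    have hre : ((hM.eigenvalues k : ℂ) - z).re = hM.eigenvalues k - E := by
      simp [hzre]
    have him : ((hM.eigenvalues k : ℂ) - z).im = -η := by simp [hzim]
    have hns : Complex.normSq ((hM.eigenvalues k : ℂ) - z)
        = (hM.eigenvalues k - E)^2 + η^2 := by
      rw [Complex.normSq_apply, hre, him]; ring
    have hns2 : Complex.normSq ((hM.eigenvalues k : ℂ) - z) ≤ 2*η^2 := by
      rw [hns]
      nlinarith
    have hnspos : 0 < Complex.normSq ((hM.eigenvalues k : ℂ) - z) := by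
      rw [hns]; positivity
    rw [ht]
    simp only [Complex.inv_im, him]
    rw [show -(-η) = η by ring]
    calc 1/(2*η) = η/(2*η^2) := by field_simp
    _ ≤ η / Complex.normSq ((hM.eigenvalues k : ℂ) - z) := by gcongr
  -- sum over eigenvalues
  have hcard : ((Finset.univ.filter fun i => eigs M i ∈ Set.Icc (E - η) (E + η)).card : ℝ) * (1/(2*η))
      ≤ ∑ k, t k := by
    calc ((Finset.univ.filter fun i => eigs M i ∈ Set.Icc (E - η) (E + η)).card : ℝ) * (1/(2*η))
        ≤ ∑ k ∈ Finset.univ.filter fun i => eigs M i ∈ Set.Icc (E - η) (E + η), t k := by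
          rw [mul_comm]
          have := Finset.card_nsmul_le_sum
            (Finset.univ.filter fun i => eigs M i ∈ Set.Icc (E - η) (E + η)) t (1/(2*η))
            (fun i hi => htb i (Finset.mem_filter.mp hi).2)
          simpa [nsmul_eq_mul, mul_comm] using this
      _ ≤ ∑ k, t k :=
          Finset.sum_le_sum_of_subset_of_nonneg (Finset.subset_univ _) (fun i _ _ => htn i)
  have hsum : ∑ k, t k = ∑ j, (((M j j : ℂ) - (z + schurQuad M j z))⁻¹).im := by
    calc ∑ k, t k = (∑ k, ((hM.eigenvalues k : ℂ) - z)⁻¹).im := (Complex.im_sum ..).symm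
      _ = (Matrix.trace (M.map Complex.ofReal - z • 1)⁻¹).im := by
          rw [herm_trace M hM z (ne_of_gt hz)]
      _ = ∑ j, ((M.map Complex.ofReal - z • 1)⁻¹ j j).im := by
          rw [Matrix.trace]; exact Complex.im_sum ..
      _ = ∑ j, (((M j j : ℂ) - (z + schurQuad M j z))⁻¹).im := by
          refine Finset.sum_congr rfl fun j _ => ?_
          rw [(schur_diag M hM j z hz).1]
  rw [← hsum]
  have h2η : 0 < 2*η := by linarith
  calc ((Finset.univ.filter fun i => eigs M i ∈ Set.Icc (E - η) (E + η)).card : ℝ)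
      = (2*η) * (((Finset.univ.filter fun i => eigs M i ∈ Set.Icc (E - η) (E + η)).card : ℝ) * (1/(2*η))) := by
        field_simp
    _ ≤ (2*η) * ∑ k, t k := by gcongr
    _ = 2 * η * ∑ k, t k := by ring

end Count

section Meas
variable {Ω : Type*} [MeasurableSpace Ω] {n : Type*} [Fintype n] [DecidableEq n]

lemma measurable_det (A : Ω → Matrix n n ℂ) (h : ∀ i j, Measurable fun ω => A ω i j) :
    Measurable fun ω => (A ω).det := by
  simp only [Matrix.det_apply']
  exact Finset.measurable_sum _ fun σ _ =>
    (Finset.measurable_prod _ fun i _ => h _ _).const_mul _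

lemma measurable_inv_entry (A : Ω → Matrix n n ℂ) (h : ∀ i j, Measurable fun ω => A ω i j)
    (a b : n) : Measurable fun ω => (A ω)⁻¹ a b := by
  have hd : Measurable fun ω => (A ω).det := measurable_det A h
  have hadj : Measurable fun ω => (A ω).adjugate a b := by
    simp only [Matrix.adjugate_apply]
    apply measurable_det
    intro i k
    by_cases hij : i = b
    · simp [Matrix.updateRow_apply, hij]
    · simp only [Matrix.updateRow_apply, hij, if_false]
      exact h i k
  have : (fun ω => (A ω)⁻¹ a b) = fun ω => ((A ω).det)⁻¹ * (A ω).adjugate a b := by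
    funext ω
    rw [Matrix.inv_def, Matrix.smul_apply, Ring.inverse_eq_inv, smul_eq_mul]
  rw [this]
  exact (hd.inv).mul hadj

end Meas

section MeasS
variable {Ω : Type*} [MeasurableSpace Ω] {N : ℕ}

lemma measurable_Sinv_im (Hf : Ω → Matrix (Fin N) (Fin N) ℝ)
    (h : ∀ i j, Measurable fun ω => Hf ω i j) (j : Fin N) (z : ℂ) :
    Measurable fun ω => (((Hf ω j j : ℂ) - (z + schurQuad (Hf ω) j z))⁻¹).im := by
  have hent : ∀ a b : {i : Fin N // i ≠ j}, Measurable fun ω => minorShift (Hf ω) j z a b := by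
    intro a b
    simp only [minorShift, Matrix.sub_apply, Matrix.of_apply, Matrix.smul_apply, smul_eq_mul]
    exact ((Complex.measurable_ofReal.comp (h a.1 b.1)).sub measurable_const)
  have hW : ∀ a b : {i : Fin N // i ≠ j}, Measurable fun ω => (minorShift (Hf ω) j z)⁻¹ a b :=
    fun a b => measurable_inv_entry (fun ω => minorShift (Hf ω) j z) hent a b
  have hQ : Measurable fun ω => schurQuad (Hf ω) j z := by
    simp only [schurQuad]
    refine Finset.measurable_sum _ fun a _ => Finset.measurable_sum _ fun b _ => ?_
    exact ((Complex.measurable_ofReal.comp (h a.1 j)).mul (hW a b)).mul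
      (Complex.measurable_ofReal.comp (h b.1 j))
  have hS : Measurable fun ω => (Hf ω j j : ℂ) - (z + schurQuad (Hf ω) j z) :=
    (Complex.measurable_ofReal.comp (h j j)).sub (measurable_const.add hQ)
  exact Complex.measurable_im.comp hS.inv

end MeasS

end Aux

/-- Wegner estimates via Schur complements: if
`N η_N · sup_j E[Im (H_jj − (E + iη_N + h_jᵀ(H^{(j)} − (E+iη_N))⁻¹ h_j))⁻¹] → 0`,
then with probability tending to one, `H_N` has no eigenvalues in `[E − η_N, E + η_N]`. -/
theorem wegner_schur
    (E : ℝ)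
    (Ω : ℕ → Type*) (mΩ : ∀ N, MeasurableSpace (Ω N))
    (P : ∀ N, Measure (Ω N)) (hP : ∀ N, IsProbabilityMeasure (P N))
    (H : ∀ N, Ω N → Matrix (Fin N) (Fin N) ℝ)
    (hmeas : ∀ N, ∀ i j, Measurable fun ω => H N ω i j)
    (hsymm : ∀ N ω, (H N ω).IsHermitian)
    (η : ℕ → ℝ) (hηpos : ∀ N, 0 < η N) (hη0 : Tendsto η atTop (nhds 0))
    (hschur : Tendsto (fun N : ℕ =>
        (N : ℝ) * η N * ⨆ j : Fin N,
          ∫ ω, (((H N ω j j : ℂ) -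
              ((E : ℂ) + (η N : ℂ) * Complex.I
                + schurQuad (H N ω) j ((E : ℂ) + (η N : ℂ) * Complex.I)))⁻¹).im ∂(P N))
      atTop (nhds 0)) :
    Tendsto (fun N : ℕ =>
        (P N {ω | ∀ i, eigs (H N ω) i ∉ Set.Icc (E - η N) (E + η N)}).toReal)
      atTop (nhds 1) := by
  classical
  set z : ℕ → ℂ := fun N => (E : ℂ) + (η N : ℂ) * Complex.I with hzdef
  have hzre : ∀ N, (z N).re = E := by intro N; simp [hzdef]
  have hzim : ∀ N, (z N).im = η N := by intro N; simp [hzdef]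
  set T : ∀ N : ℕ, Fin N → Ω N → ℝ := fun N j ω =>
    (((H N ω j j : ℂ) - (z N + schurQuad (H N ω) j (z N)))⁻¹).im with hTdef
  have hTmeas : ∀ N j, Measurable (T N j) := fun N j =>
    measurable_Sinv_im (H N) (hmeas N) j (z N)
  have hTbounds : ∀ N j ω, 0 ≤ T N j ω ∧ T N j ω ≤ 1 / η N := by
    intro N j ω
    have hz : 0 < (z N).im := by rw [hzim]; exact hηpos N
    have hb := (schur_diag (H N ω) (hsymm N ω) j (z N) hz).2
    rw [hzim] at hb
    exact im_inv_bounds _ (hηpos N) hb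
  set f : ∀ N : ℕ, Ω N → ℝ := fun N ω => 2 * η N * ∑ j, T N j ω with hfdef
  have hfmeas : ∀ N, Measurable (f N) :=
    fun N => (Finset.measurable_sum _ fun j _ => hTmeas N j).const_mul _
  have hfnonneg : ∀ N ω, 0 ≤ f N ω := by
    intro N ω
    apply mul_nonneg (by have := hηpos N; linarith)
    exact Finset.sum_nonneg fun j _ => (hTbounds N j ω).1
  have hfint : ∀ N, Integrable (f N) (P N) := by
    intro N
    haveI := hP N
    refine Integrable.const_mul (integrable_finset_sum _ fun j _ => ?_) _
    refine ⟨(hTmeas N j).aestronglyMeasurable, ?_⟩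
    apply MeasureTheory.HasFiniteIntegral.of_bounded (C := 1 / η N)
    filter_upwards with ω
    rw [Real.norm_eq_abs, abs_of_nonneg (hTbounds N j ω).1]
    exact (hTbounds N j ω).2
  -- counting: if some eigenvalue is in the window, then f ≥ 1
  have hcontain : ∀ N,
      {ω | ∀ i, eigs (H N ω) i ∉ Set.Icc (E - η N) (E + η N)}ᶜ ⊆ {ω | 1 ≤ f N ω} := by
    intro N ω hω
    simp only [Set.mem_compl_iff, Set.mem_setOf_eq, not_forall, not_not] at hω
    obtain ⟨i, hi⟩ := hω
    have hcard : (1 : ℝ) ≤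
        ((Finset.univ.filter fun i => eigs (H N ω) i ∈ Set.Icc (E - η N) (E + η N)).card : ℝ) := by
      have : i ∈ Finset.univ.filter fun i => eigs (H N ω) i ∈ Set.Icc (E - η N) (E + η N) :=
        Finset.mem_filter.mpr ⟨Finset.mem_univ i, hi⟩
      have hpos := Finset.card_pos.mpr ⟨i, this⟩
      exact_mod_cast hpos
    refine le_trans hcard ?_
    exact count_bound (H N ω) (hsymm N ω) E (η N) (hηpos N) (z N) (hzre N) (hzim N)
  -- Markov bound
  set g : ℕ → ℝ := fun N => (P N {ω | 1 ≤ f N ω}).toReal with hgdef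
  have hgnonneg : ∀ N, 0 ≤ g N := fun N => ENNReal.toReal_nonneg
  have hgle : ∀ N, g N ≤ 2 * ((N : ℝ) * η N * ⨆ j : Fin N, ∫ ω, T N j ω ∂(P N)) := by
    intro N
    haveI := hP N
    have hmarkov := mul_meas_ge_le_integral_of_nonneg
      (ae_of_all _ (hfnonneg N)) (hfint N) 1
    rw [one_mul] at hmarkov
    refine le_trans hmarkov ?_
    have hint_sum : ∫ ω, f N ω ∂(P N) = 2 * η N * ∑ j, ∫ ω, T N j ω ∂(P N) := by
      rw [hfdef]
      simp only
      rw [MeasureTheory.integral_const_mul]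
      congr 1
      exact integral_finset_sum _ fun j _ => by
        refine ⟨(hTmeas N j).aestronglyMeasurable, ?_⟩
        apply MeasureTheory.HasFiniteIntegral.of_bounded (C := 1 / η N)
        filter_upwards with ω
        rw [Real.norm_eq_abs, abs_of_nonneg (hTbounds N j ω).1]
        exact (hTbounds N j ω).2
    rw [hint_sum]
    have hbdd : BddAbove (Set.range fun j : Fin N => ∫ ω, T N j ω ∂(P N)) :=
      Set.Finite.bddAbove (Set.finite_range _)
    have hsum_le : ∑ j, ∫ ω, T N j ω ∂(P N)
        ≤ (N : ℝ) * ⨆ j : Fin N, ∫ ω, T N j ω ∂(P N) := by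
      calc ∑ j, ∫ ω, T N j ω ∂(P N)
          ≤ ∑ _j : Fin N, ⨆ j : Fin N, ∫ ω, T N j ω ∂(P N) :=
            Finset.sum_le_sum fun j _ => le_ciSup hbdd j
        _ = (N : ℝ) * ⨆ j : Fin N, ∫ ω, T N j ω ∂(P N) := by
            rw [Finset.sum_const, Finset.card_univ, Fintype.card_fin, nsmul_eq_mul]
    calc 2 * η N * ∑ j, ∫ ω, T N j ω ∂(P N)
        ≤ 2 * η N * ((N : ℝ) * ⨆ j : Fin N, ∫ ω, T N j ω ∂(P N)) := by
          have h2 : (0:ℝ) ≤ 2 * η N := by have := hηpos N; linarith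
          exact mul_le_mul_of_nonneg_left hsum_le h2
      _ = 2 * ((N : ℝ) * η N * ⨆ j : Fin N, ∫ ω, T N j ω ∂(P N)) := by ring
  have hg0 : Tendsto g atTop (nhds 0) := by
    have h2 : Tendsto (fun N : ℕ => 2 * ((N : ℝ) * η N * ⨆ j : Fin N,
        ∫ ω, (((H N ω j j : ℂ) -
              ((E : ℂ) + (η N : ℂ) * Complex.I
                + schurQuad (H N ω) j ((E : ℂ) + (η N : ℂ) * Complex.I)))⁻¹).im ∂(P N)))
        atTop (nhds (2 * 0)) := hschur.const_mul 2
    rw [mul_zero] at h2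
    exact squeeze_zero hgnonneg hgle h2
  -- final squeeze
  have hmeasset : ∀ N, MeasurableSet {ω | 1 ≤ f N ω} :=
    fun N => (hfmeas N) measurableSet_Ici
  have hlower : ∀ N, 1 - g N ≤ (P N {ω | ∀ i, eigs (H N ω) i ∉ Set.Icc (E - η N) (E + η N)}).toReal := by
    intro N
    haveI := hP N
    have hsub : {ω | 1 ≤ f N ω}ᶜ ⊆ {ω | ∀ i, eigs (H N ω) i ∉ Set.Icc (E - η N) (E + η N)} := by
      intro ω hω
      by_contra hcon
      exact hω (hcontain N hcon)
    have h1 : P N {ω | 1 ≤ f N ω}ᶜ ≤ P N {ω | ∀ i, eigs (H N ω) i ∉ Set.Icc (E - η N) (E + η N)} :=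
      measure_mono hsub
    have h2 : (P N {ω | 1 ≤ f N ω}ᶜ).toReal = 1 - g N := by
      rw [measure_compl (hmeasset N) (measure_ne_top _ _), measure_univ]
      rw [ENNReal.toReal_sub_of_le prob_le_one ENNReal.one_ne_top]
      simp [hgdef]
    rw [← h2]
    exact ENNReal.toReal_mono (measure_ne_top _ _) h1
  have hupper : ∀ N, (P N {ω | ∀ i, eigs (H N ω) i ∉ Set.Icc (E - η N) (E + η N)}).toReal ≤ 1 := by
    intro N
    haveI := hP N
    calc (P N _).toReal ≤ (P N Set.univ).toReal :=
          ENNReal.toReal_mono (measure_ne_top _ _) (measure_mono (Set.subset_univ _))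
      _ = 1 := by rw [measure_univ, ENNReal.toReal_one]
  have hlim : Tendsto (fun N => 1 - g N) atTop (nhds 1) := by
    have := hg0.const_sub 1
    simpa using this
  exact tendsto_of_tendsto_of_tendsto_of_le_of_le hlim tendsto_const_nhds hlower hupper
end

section
/- Fix real numbers 0 < η ≤ K and define log_η(x) = (1/2)·log(x² + η²) and log_η^K(x) = min(log_η(x), log_η(K)). Define functions log₁, log₂, log₃ : ℝ → ℝ by: log₁(x) = −x/(2η) − 1/2 + log_η(η) for x ≤ −η, log₁(x) = log_η(x) for −η ≤ x ≤ η, log₁(x) = x/(2η) − 1/2 + log_η(η) for x ≥ η; log₂(x) = x/(2η) for x ≤ η, and log₂(x) = log_η^K(x) + 1/2 − log_η(η) for x ≥ η; log₃(x) = −x/(2η) for x ≥ −η, and log₃(x) = log_η^K(x) + 1/2 − log_η(η) for x ≤ −η. Then log_η^K(x) = log₁(x) + log₂(x) + log₃(x) for all x ∈ ℝ, log₁ is convex on ℝ, log₂ and log₃ are concave on ℝ, and each of log₁, log₂, log₃ is Lipschitz with constant 1/(2η). -/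
open Real

/-- The regularized logarithm `log_η(x) = (1/2) log(x² + η²) = log|x + iη|`. -/
noncomputable def logEta (η x : ℝ) : ℝ := (1 / 2) * Real.log (x ^ 2 + η ^ 2)

/-- The regularized and truncated logarithm `log_η^K(x) = min(log_η(x), log_η(K))`. -/
noncomputable def logEtaK (η K x : ℝ) : ℝ := min (logEta η x) (logEta η K)

/-- The convex piece `log₁` in the decomposition of `log_η^K`. -/
noncomputable def logPiece₁ (η K x : ℝ) : ℝ :=
  if x ≤ -η then -x / (2 * η) - 1 / 2 + logEta η η
  else if x ≤ η then logEta η x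
  else x / (2 * η) - 1 / 2 + logEta η η

/-- The concave piece `log₂` in the decomposition of `log_η^K`. -/
noncomputable def logPiece₂ (η K x : ℝ) : ℝ :=
  if x ≤ η then x / (2 * η) else logEtaK η K x + 1 / 2 - logEta η η

/-- The concave piece `log₃` in the decomposition of `log_η^K`. -/
noncomputable def logPiece₃ (η K x : ℝ) : ℝ :=
  if -η ≤ x then -x / (2 * η) else logEtaK η K x + 1 / 2 - logEta η η


open Set Filter

/-- derivative candidate for piece 1 -/
noncomputable def dOne (η x : ℝ) : ℝ :=
  if x ≤ -η then -(1/(2*η)) else if x ≤ η then x/(x^2+η^2) else 1/(2*η)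

/-- derivative candidate for smooth part of piece 2 -/
noncomputable def dTwo (η x : ℝ) : ℝ := if x ≤ η then 1/(2*η) else x/(x^2+η^2)

/-- smooth part of piece 2 -/
noncomputable def gTwo (η x : ℝ) : ℝ :=
  if x ≤ η then x / (2*η) else logEta η x + 1/2 - logEta η η

lemma logEta_neg (η x : ℝ) : logEta η (-x) = logEta η x := by simp [logEta]

lemma hasDerivAt_logEta {η : ℝ} (hη : 0 < η) (x : ℝ) :
    HasDerivAt (logEta η) (x / (x^2 + η^2)) x := by
  have h0 : (0:ℝ) < x^2 + η^2 := by positivity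
  have h1 : HasDerivAt (fun y : ℝ => y^2 + η^2) (2*x) x := by
    simpa using (hasDerivAt_pow 2 x).add_const (η^2)
  have h2 := (h1.log h0.ne').const_mul (1/2 : ℝ)
  unfold logEta
  refine h2.congr_deriv ?_
  field_simp

lemma phi_lb {η : ℝ} (hη : 0 < η) (x : ℝ) : -(1/(2*η)) ≤ x/(x^2+η^2) := by
  have h0 : (0:ℝ) < x^2 + η^2 := by positivity
  rw [neg_le, ← neg_div, div_le_div_iff₀ h0 (by positivity)]
  nlinarith [sq_nonneg (x + η)]

lemma phi_ub {η : ℝ} (hη : 0 < η) (x : ℝ) : x/(x^2+η^2) ≤ 1/(2*η) := by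
  have h0 : (0:ℝ) < x^2 + η^2 := by positivity
  rw [div_le_div_iff₀ h0 (by positivity)]
  nlinarith [sq_nonneg (x - η)]

lemma phi_mono {η a b : ℝ} (hη : 0 < η) (ha : -η ≤ a) (hab : a ≤ b) (hb : b ≤ η) :
    a/(a^2+η^2) ≤ b/(b^2+η^2) := by
  have h0 : (0:ℝ) < a^2 + η^2 := by positivity
  have h1 : (0:ℝ) < b^2 + η^2 := by positivity
  rw [div_le_div_iff₀ h0 h1]
  nlinarith [mul_nonneg (sub_nonneg.2 hab)
    (by nlinarith [mul_nonneg (by linarith : (0:ℝ) ≤ η - b) (by linarith : (0:ℝ) ≤ a + η),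
      mul_nonneg (by linarith : (0:ℝ) ≤ η - a) (by linarith : (0:ℝ) ≤ η + b)] :
      (0:ℝ) ≤ η^2 - a*b)]

lemma phi_anti {η a b : ℝ} (hη : 0 < η) (ha : η ≤ a) (hab : a ≤ b) :
    b/(b^2+η^2) ≤ a/(a^2+η^2) := by
  have h0 : (0:ℝ) < a^2 + η^2 := by positivity
  have h1 : (0:ℝ) < b^2 + η^2 := by positivity
  rw [div_le_div_iff₀ h1 h0]
  nlinarith [mul_nonneg (sub_nonneg.2 hab)
    (by nlinarith : (0:ℝ) ≤ a*b - η^2)]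

lemma hasDerivAt_glue {F f g : ℝ → ℝ} {a c : ℝ}
    (hf : HasDerivAt f c a) (hg : HasDerivAt g c a)
    (h1 : ∀ᶠ x in nhds a, x ≤ a → F x = f x)
    (h2 : ∀ᶠ x in nhds a, a ≤ x → F x = g x) : HasDerivAt F c a := by
  have hF1 : HasDerivWithinAt F c (Iic a) a := by
    refine hf.hasDerivWithinAt.congr_of_eventuallyEq ?_ (h1.self_of_nhds le_rfl)
    filter_upwards [h1.filter_mono nhdsWithin_le_nhds, self_mem_nhdsWithin] with x hx hx'
    exact hx hx'
  have hF2 : HasDerivWithinAt F c (Ici a) a := by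
    refine hg.hasDerivWithinAt.congr_of_eventuallyEq ?_ (h2.self_of_nhds le_rfl)
    filter_upwards [h2.filter_mono nhdsWithin_le_nhds, self_mem_nhdsWithin] with x hx hx'
    exact hx hx'
  have := hF1.union hF2
  rw [Iic_union_Ici] at this
  exact hasDerivWithinAt_univ.mp this

lemma hasDerivAt_line {η : ℝ} (x : ℝ) :
    HasDerivAt (fun y : ℝ => y / (2*η)) (1/(2*η)) x := by
  simpa using (hasDerivAt_id x).div_const (2*η)

lemma hasDerivAt_lineLo {η c : ℝ} (x : ℝ) :
    HasDerivAt (fun y : ℝ => -y / (2*η) - 1/2 + c) (-(1/(2*η))) x := by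
  have := (((hasDerivAt_id x).neg.div_const (2*η)).sub_const (1/2 : ℝ)).add_const c
  refine this.congr_deriv ?_
  ring

lemma hasDerivAt_lineHi {η c : ℝ} (x : ℝ) :
    HasDerivAt (fun y : ℝ => y / (2*η) - 1/2 + c) (1/(2*η)) x := by
  simpa using (((hasDerivAt_id x).div_const (2*η)).sub_const (1/2 : ℝ)).add_const c

lemma hasDerivAt_piece₁ {η : ℝ} (hη : 0 < η) (K x : ℝ) :
    HasDerivAt (logPiece₁ η K) (dOne η x) x := by
  rcases lt_trichotomy x (-η) with hx | hx | hx
  · rw [show dOne η x = -(1/(2*η)) by simp [dOne, hx.le]]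
    refine (hasDerivAt_lineLo (c := logEta η η) x).congr_of_eventuallyEq ?_
    filter_upwards [eventually_lt_nhds hx] with y hy
    simp [logPiece₁, hy.le]
  · subst hx
    rw [show dOne η (-η) = -(1/(2*η)) by simp [dOne]]
    refine hasDerivAt_glue (g := logEta η) (hasDerivAt_lineLo (c := logEta η η) (-η)) ?_ ?_ ?_
    · convert hasDerivAt_logEta hη (-η) using 1
      field_simp
      ring
    · filter_upwards with y hy
      simp [logPiece₁, hy]
    · filter_upwards [eventually_lt_nhds (show -η < η by linarith)] with y hy hy2
      by_cases h : y ≤ -η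
      · have he : y = -η := le_antisymm h hy2
        subst he
        rw [logPiece₁, if_pos le_rfl, logEta_neg]
        field_simp
        ring
      · simp [logPiece₁, h, hy.le]
  · rcases lt_trichotomy x η with hx2 | hx2 | hx2
    · rw [show dOne η x = x/(x^2+η^2) by simp [dOne, not_le.2 hx, hx2.le]]
      refine (hasDerivAt_logEta hη x).congr_of_eventuallyEq ?_
      filter_upwards [eventually_gt_nhds hx, eventually_lt_nhds hx2] with y h1 h2
      simp [logPiece₁, not_le.2 h1, h2.le]
    · subst hx2
      rw [show dOne x x = x/(x^2+x^2) by
        simp [dOne, not_le.2 (show -x < x by linarith)]]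
      refine hasDerivAt_glue (g := fun y => y / (2*x) - 1/2 + logEta x x) (hasDerivAt_logEta hη x) ?_ ?_ ?_
      · convert hasDerivAt_lineHi (η := x) (c := logEta x x) x using 1
        field_simp
        ring
      · filter_upwards [eventually_gt_nhds (show -x < x by linarith)] with y hy hy2
        simp [logPiece₁, not_le.2 hy, hy2]
      · filter_upwards with y hy
        by_cases h : y ≤ x
        · have he : y = x := le_antisymm h hy
          subst he
          rw [logPiece₁, if_neg (by push_neg; linarith), if_pos le_rfl]
          field_simp
          ring
        · simp [logPiece₁, h, show ¬ y ≤ -x by push_neg; linarith]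
    · rw [show dOne η x = 1/(2*η) by simp [dOne, not_le.2 hx2, not_le.2 (show -η < x by linarith)]]
      refine (hasDerivAt_lineHi (c := logEta η η) x).congr_of_eventuallyEq ?_
      filter_upwards [eventually_gt_nhds hx2] with y hy
      simp [logPiece₁, not_le.2 hy, show ¬ y ≤ -η by push_neg; linarith]

lemma hasDerivAt_gTwo {η : ℝ} (hη : 0 < η) (x : ℝ) :
    HasDerivAt (gTwo η) (dTwo η x) x := by
  rcases lt_trichotomy x η with hx | hx | hx
  · rw [show dTwo η x = 1/(2*η) by simp [dTwo, hx.le]]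
    refine (hasDerivAt_line (η := η) x).congr_of_eventuallyEq ?_
    filter_upwards [eventually_lt_nhds hx] with y hy
    simp [gTwo, hy.le]
  · subst hx
    rw [show dTwo x x = 1/(2*x) by simp [dTwo]]
    refine hasDerivAt_glue (g := fun y => logEta x y + 1/2 - logEta x x)
      (hasDerivAt_line x) ?_ ?_ ?_
    · have := ((hasDerivAt_logEta hη x).add_const (1/2 : ℝ)).sub_const (logEta x x)
      refine this.congr_deriv ?_
      field_simp
      ring
    · filter_upwards with y hy
      simp [gTwo, hy]
    · filter_upwards with y hy
      by_cases h : y ≤ x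
      · have he : y = x := le_antisymm h hy
        subst he
        rw [gTwo, if_pos le_rfl]
        field_simp
        ring
      · simp [gTwo, h]
  · rw [show dTwo η x = x/(x^2+η^2) by simp [dTwo, not_le.2 hx]]
    have := ((hasDerivAt_logEta hη x).add_const (1/2 : ℝ)).sub_const (logEta η η)
    refine this.congr_of_eventuallyEq ?_
    filter_upwards [eventually_gt_nhds hx] with y hy
    simp [gTwo, not_le.2 hy]

lemma mono_dOne {η : ℝ} (hη : 0 < η) : Monotone (dOne η) := by
  have hpos : (0:ℝ) < 1/(2*η) := by positivity
  intro a b hab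
  unfold dOne
  split_ifs with h1 h2 h3 h4 h5 h6 h7 h8 <;>
    first
      | rfl
      | exact phi_lb hη _
      | exact phi_ub hη _
      | exact phi_mono hη (by linarith) hab (by linarith)
      | linarith

lemma anti_dTwo {η : ℝ} (hη : 0 < η) : Antitone (dTwo η) := by
  have hpos : (0:ℝ) < 1/(2*η) := by positivity
  intro a b hab
  unfold dTwo
  split_ifs with h1 h2 h3 <;>
    first
      | rfl
      | exact phi_ub hη _
      | exact phi_anti hη (by linarith) hab
      | linarith

lemma bound_dOne {η : ℝ} (hη : 0 < η) (x : ℝ) : |dOne η x| ≤ 1/(2*η) := by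
  unfold dOne
  split_ifs with h1 h2
  · rw [abs_neg, abs_of_pos (by positivity)]
  · exact abs_le.2 ⟨phi_lb hη x, phi_ub hη x⟩
  · rw [abs_of_pos (by positivity)]

lemma bound_dTwo {η : ℝ} (hη : 0 < η) (x : ℝ) : |dTwo η x| ≤ 1/(2*η) := by
  unfold dTwo
  split_ifs with h1
  · rw [abs_of_pos (by positivity)]
  · exact abs_le.2 ⟨phi_lb hη x, phi_ub hη x⟩

lemma logEta_le {η : ℝ} (hη : 0 < η) (x K : ℝ) (h : x^2 ≤ K^2) :
    logEta η x ≤ logEta η K := by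
  unfold logEta
  have h2 : Real.log (x^2 + η^2) ≤ Real.log (K^2 + η^2) := by
    apply Real.log_le_log (by positivity)
    linarith
  linarith

lemma piece₂_eq {η K : ℝ} (hη : 0 < η) (hK : η ≤ K) :
    logPiece₂ η K = fun x => min (gTwo η x) (logEta η K + 1/2 - logEta η η) := by
  funext x
  have hEK : logEta η η ≤ logEta η K := logEta_le hη η K (by nlinarith)
  by_cases h : x ≤ η
  · have h2 : x/(2*η) ≤ 1/2 := by rw [div_le_iff₀ (by positivity)]; linarith
    simp only [logPiece₂, gTwo, if_pos h]
    exact (min_eq_left (by linarith)).symm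
  · simp only [logPiece₂, gTwo, if_neg h, logEtaK]
    rcases le_total (logEta η x) (logEta η K) with h' | h'
    · rw [min_eq_left h', min_eq_left (by linarith)]
    · rw [min_eq_right h', min_eq_right (by linarith)]

lemma piece₃_eq (η K : ℝ) : logPiece₃ η K = fun x => logPiece₂ η K (-x) := by
  funext x
  rw [logPiece₃, logPiece₂]
  by_cases h : -η ≤ x
  · rw [if_pos h, if_pos (neg_le.2 h)]
  · rw [if_neg h, if_neg (fun hc => h (neg_le.1 hc)), logEtaK, logEtaK, logEta_neg]

lemma concave_comp_neg {f : ℝ → ℝ} (hf : ConcaveOn ℝ univ f) :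
    ConcaveOn ℝ univ (fun x => f (-x)) := by
  refine ⟨convex_univ, fun x _ y _ a b ha hb hab => ?_⟩
  have h2 : a • (-x) + b • (-y) = -(a • x + b • y) := by
    simp only [smul_eq_mul]; ring
  have := hf.2 (mem_univ (-x)) (mem_univ (-y)) ha hb hab
  show a • f (-x) + b • f (-y) ≤ f (-(a • x + b • y))
  rw [← h2]
  exact this

lemma lipschitz_comp_neg {f : ℝ → ℝ} {C : NNReal} (hf : LipschitzWith C f) :
    LipschitzWith C (fun x => f (-x)) := by
  have h : LipschitzWith 1 (fun x : ℝ => -x) :=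
    LipschitzWith.of_dist_le_mul (fun x y => by rw [dist_neg_neg]; simp)
  simpa [Function.comp_def] using hf.comp h

/-- `log_η^K` decomposes as a sum of a convex and two concave `1/(2η)`-Lipschitz functions. -/
theorem logEtaK_decomposition (η K : ℝ) (hη : 0 < η) (hK : η ≤ K) :
    (∀ x : ℝ, logEtaK η K x = logPiece₁ η K x + logPiece₂ η K x + logPiece₃ η K x) ∧
    ConvexOn ℝ Set.univ (logPiece₁ η K) ∧
    ConcaveOn ℝ Set.univ (logPiece₂ η K) ∧
    ConcaveOn ℝ Set.univ (logPiece₃ η K) ∧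
    LipschitzWith (Real.toNNReal (1 / (2 * η))) (logPiece₁ η K) ∧
    LipschitzWith (Real.toNNReal (1 / (2 * η))) (logPiece₂ η K) ∧
    LipschitzWith (Real.toNNReal (1 / (2 * η))) (logPiece₃ η K) := by
  have hdiff₁ : Differentiable ℝ (logPiece₁ η K) :=
    fun x => (hasDerivAt_piece₁ hη K x).differentiableAt
  have hderiv₁ : deriv (logPiece₁ η K) = dOne η :=
    funext fun x => (hasDerivAt_piece₁ hη K x).deriv
  have hdiff₂ : Differentiable ℝ (gTwo η) :=
    fun x => (hasDerivAt_gTwo hη x).differentiableAt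
  have hderiv₂ : deriv (gTwo η) = dTwo η :=
    funext fun x => (hasDerivAt_gTwo hη x).deriv
  have hnn : ∀ d : ℝ, |d| ≤ 1/(2*η) → ‖d‖₊ ≤ Real.toNNReal (1/(2*η)) := by
    intro d hd
    rw [← NNReal.coe_le_coe, coe_nnnorm, Real.norm_eq_abs,
      Real.coe_toNNReal _ (by positivity)]
    exact hd
  have hlip₂ : LipschitzWith (Real.toNNReal (1 / (2 * η))) (gTwo η) :=
    lipschitzWith_of_nnnorm_deriv_le hdiff₂
      (fun x => by rw [hderiv₂]; exact hnn _ (bound_dTwo hη x))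
  have hconc₂ : ConcaveOn ℝ Set.univ (gTwo η) :=
    Antitone.concaveOn_univ_of_deriv hdiff₂ (hderiv₂ ▸ anti_dTwo hη)
  refine ⟨?_, ?_, ?_, ?_, ?_, ?_, ?_⟩
  · intro x
    by_cases hx1 : x ≤ -η
    · by_cases hx3 : -η ≤ x
      · have hxe : x = -η := le_antisymm hx1 hx3
        subst hxe
        rw [logPiece₁, if_pos le_rfl, logPiece₂, if_pos (by linarith),
          logPiece₃, if_pos le_rfl,
          show logEtaK η K (-η) = logEta η η from by
            rw [logEtaK, logEta_neg]
            exact min_eq_left (logEta_le hη η K (by nlinarith))]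
        field_simp
        ring
      · rw [logPiece₁, if_pos hx1, logPiece₂, if_pos (by linarith),
          logPiece₃, if_neg hx3]
        ring
    · push_neg at hx1
      by_cases hx2 : x ≤ η
      · rw [logPiece₁, if_neg (not_le.2 hx1), if_pos hx2, logPiece₂, if_pos hx2,
          logPiece₃, if_pos hx1.le, logEtaK,
          min_eq_left (logEta_le hη x K (by nlinarith))]
        ring
      · push_neg at hx2
        rw [logPiece₁, if_neg (by push_neg; linarith), if_neg (not_le.2 hx2),
          logPiece₂, if_neg (not_le.2 hx2), logPiece₃, if_pos (by linarith)]
        ring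
  · exact Monotone.convexOn_univ_of_deriv hdiff₁ (hderiv₁ ▸ mono_dOne hη)
  · rw [piece₂_eq hη hK]
    exact hconc₂.inf (concaveOn_const _ convex_univ)
  · rw [piece₃_eq, piece₂_eq hη hK]
    exact concave_comp_neg (hconc₂.inf (concaveOn_const _ convex_univ))
  · exact lipschitzWith_of_nnnorm_deriv_le hdiff₁
      (fun x => by rw [hderiv₁]; exact hnn _ (bound_dOne hη x))
  · rw [piece₂_eq hη hK]
    exact hlip₂.min_const _
  · rw [piece₃_eq, piece₂_eq hη hK]
    exact lipschitz_comp_neg (hlip₂.min_const _)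
end

section
/- Fix a real number p ≥ 1 and E ∈ ℝ. Let μ be a probability measure on ℝ with finite (2p)-th moment, i.e. ∫_ℝ |x|^{2p} μ(dx) < ∞, and for each N let H_N be a real symmetric N×N Wigner matrix associated with μ. Then limsup_{N→∞} (1/N) log E[|det(H_N − E·Id)|^p] < ∞. -/
set_option maxHeartbeats 1000000
open MeasureTheory ProbabilityTheory Real Filter

lemma my_trace_eq_sum_eigenvalues {n : ℕ} {A : Matrix (Fin n) (Fin n) ℝ} (hA : A.IsHermitian) :
    A.trace = ∑ i, hA.eigenvalues i := by
  conv_lhs => rw [hA.spectral_theorem]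
  rw [Unitary.conjStarAlgAut_apply, Matrix.trace_mul_cycle, Matrix.mem_unitaryGroup_iff'.mp (hA.eigenvectorUnitary).2, one_mul]
  simp [Matrix.trace_diagonal]

lemma my_det_le_one_of_trace {n : ℕ} (hn : 0 < n) {S : Matrix (Fin n) (Fin n) ℝ}
    (hS : S.PosSemidef) (htr : S.trace ≤ n) : S.det ≤ 1 := by
  have h1 : S.det = ∏ i, hS.1.eigenvalues i := by simpa using hS.1.det_eq_prod_eigenvalues
  have hnn : ∀ i, 0 ≤ hS.1.eigenvalues i := hS.eigenvalues_nonneg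
  have hAM := Real.geom_mean_le_arith_mean_weighted Finset.univ (fun _ => (n : ℝ)⁻¹)
    (fun i => hS.1.eigenvalues i) (fun i _ => by positivity)
    (by simp [Finset.card_univ]; field_simp) (fun i _ => hnn i)
  have h2 : ∏ i, (hS.1.eigenvalues i) ^ ((n : ℝ)⁻¹) ≤ 1 := by
    refine hAM.trans ?_
    rw [← Finset.mul_sum, ← my_trace_eq_sum_eigenvalues hS.1]
    calc (n:ℝ)⁻¹ * S.trace ≤ (n:ℝ)⁻¹ * n :=
          mul_le_mul_of_nonneg_left htr (by positivity)
      _ = 1 := by field_simp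
  have h3 : (∏ i, hS.1.eigenvalues i) ^ ((n : ℝ)⁻¹) ≤ 1 := by
    rwa [← Real.finset_prod_rpow _ _ (fun i _ => hnn i)]
  calc S.det = ((∏ i, hS.1.eigenvalues i) ^ ((n : ℝ)⁻¹)) ^ n := by
        rw [Real.rpow_inv_natCast_pow (Finset.prod_nonneg fun i _ => hnn i) hn.ne', h1]
    _ ≤ 1 := pow_le_one₀ (Real.rpow_nonneg (Finset.prod_nonneg fun i _ => hnn i) _) h3

lemma my_hadamard {n : ℕ} (M : Matrix (Fin n) (Fin n) ℝ) :
    M.det ^ 2 ≤ ∏ i, ∑ j, M i j ^ 2 := by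
  rcases Nat.eq_zero_or_pos n with h0 | hn
  · subst h0; simp [Matrix.det_fin_zero]
  by_cases hrow : ∀ i, ∑ j, M i j ^ 2 ≠ 0
  case neg =>
    push_neg at hrow
    obtain ⟨i, hi⟩ := hrow
    have hz : ∀ j, M i j = 0 := by
      intro j
      have h := (Finset.sum_eq_zero_iff_of_nonneg (fun j _ => sq_nonneg (M i j))).mp hi j
        (Finset.mem_univ j)
      exact pow_eq_zero_iff two_ne_zero |>.mp h
    rw [Matrix.det_eq_zero_of_row_eq_zero i hz]
    have : (0:ℝ) ≤ ∏ i, ∑ j, M i j ^ 2 :=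
      Finset.prod_nonneg fun i _ => Finset.sum_nonneg fun j _ => sq_nonneg _
    simpa using this
  case pos =>
    set t : Fin n → ℝ := fun i => ∑ j, M i j ^ 2 with ht_def
    have ht : ∀ i, 0 < t i := fun i =>
      lt_of_le_of_ne (Finset.sum_nonneg fun j _ => sq_nonneg _) (Ne.symm (hrow i))
    set T : Matrix (Fin n) (Fin n) ℝ := Matrix.of fun i j => M i j / Real.sqrt (t i) with hT_def
    have hM : M = Matrix.diagonal (fun i => Real.sqrt (t i)) * T := by
      ext i j
      rw [Matrix.diagonal_mul]
      simp only [hT_def, Matrix.of_apply]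
      rw [mul_comm, div_mul_cancel₀ _ (Real.sqrt_ne_zero'.mpr (ht i))]
    have hdet : M.det = (∏ i, Real.sqrt (t i)) * T.det := by
      rw [hM, Matrix.det_mul, Matrix.det_diagonal]
    have hTrow : ∀ i, ∑ j, T i j ^ 2 = 1 := by
      intro i
      simp only [hT_def, Matrix.of_apply, div_pow, Real.sq_sqrt (ht i).le]
      rw [← Finset.sum_div]
      exact div_self (hrow i)
    have hS : (T * T.transpose).PosSemidef := by
      have := Matrix.posSemidef_self_mul_conjTranspose T
      rwa [Matrix.conjTranspose_eq_transpose_of_trivial] at this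
    have htr : (T * T.transpose).trace = n := by
      simp only [Matrix.trace, Matrix.diag, Matrix.mul_apply, Matrix.transpose_apply,
        star_trivial]
      calc ∑ i, ∑ j, T i j * T i j = ∑ i, ∑ j, T i j ^ 2 := by simp [sq]
        _ = (n : ℝ) := by simp [hTrow]
    have hdT : T.det ^ 2 ≤ 1 := by
      have h1 : (T * T.transpose).det = T.det ^ 2 := by
        rw [Matrix.det_mul, Matrix.det_transpose, sq]
      rw [← h1]
      exact my_det_le_one_of_trace hn hS htr.le
    calc M.det ^ 2 = (∏ i, t i) * T.det ^ 2 := by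
          rw [hdet, mul_pow, ← Finset.prod_pow]
          congr 1
          exact Finset.prod_congr rfl fun i _ => Real.sq_sqrt (ht i).le
      _ ≤ (∏ i, t i) * 1 := by
          refine mul_le_mul_of_nonneg_left hdT (Finset.prod_nonneg fun i _ => (ht i).le)
      _ = ∏ i, ∑ j, M i j ^ 2 := by rw [mul_one]

lemma my_lintegral_prod_blocks
    {Ω : Type*} [MeasurableSpace Ω] {P : Measure Ω} [IsProbabilityMeasure P]
    {ι : Type*} {x : ι → Ω → ℝ}
    (hx : iIndepFun x P) (hxm : ∀ q, Measurable (x q))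
    {κ : Type*} [DecidableEq κ] (B : κ → Finset ι)
    (hdisj : ∀ k l, k ≠ l → Disjoint (B k) (B l))
    (φ : ∀ k, ({q // q ∈ B k} → ℝ) → ENNReal) (hφ : ∀ k, Measurable (φ k))
    (s : Finset κ) :
    ∫⁻ ω, ∏ k ∈ s, φ k (fun q => x q.1 ω) ∂P
      = ∏ k ∈ s, ∫⁻ ω, φ k (fun q => x q.1 ω) ∂P := by
  classical
  induction s using Finset.induction_on with
  | empty => simp
  | @insert a s ha ih =>
    have hGmeas : ∀ k, Measurable (fun ω => φ k (fun q => x q.1 ω)) := fun k =>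
      (hφ k).comp (measurable_pi_lambda _ fun q => hxm q.1)
    have hsub : ∀ k ∈ s, B k ⊆ s.biUnion B := fun k hk =>
      Finset.subset_biUnion_of_mem B hk
    -- the tail product as a function of the coordinates in the union
    set ψ : ({q // q ∈ s.biUnion B} → ℝ) → ENNReal :=
      fun v => ∏ k ∈ s.attach, φ k.1 (fun q => v ⟨q.1, hsub k.1 k.2 q.2⟩) with hψ
    have hψm : Measurable ψ := by
      refine Finset.measurable_prod _ fun k _ => ?_
      exact (hφ k.1).comp (measurable_pi_lambda _ fun q => measurable_pi_apply _)
    have htail : (fun ω => ∏ k ∈ s, φ k (fun q => x q.1 ω))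
        = fun ω => ψ (fun q => x q.1 ω) := by
      funext ω
      rw [hψ, ← Finset.prod_attach s (fun k => φ k (fun q => x q.1 ω))]
    have hdisj2 : Disjoint (B a) (s.biUnion B) := by
      rw [Finset.disjoint_biUnion_right]
      exact fun k hk => hdisj a k (by rintro rfl; exact ha hk)
    have hindep0 := hx.indepFun_finset (B a) (s.biUnion B) hdisj2 hxm
    have hindep : IndepFun (fun ω => φ a (fun q => x q.1 ω))
        (fun ω => ψ (fun q => x q.1 ω)) P :=
      hindep0.comp (hφ a) hψm
    simp only [Finset.prod_insert ha]; rw [← ih]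
    have := lintegral_mul_eq_lintegral_mul_lintegral_of_indepFun''
      (μ := P) (hGmeas a).aemeasurable ((hψm.comp (measurable_pi_lambda _ fun q => hxm q.1)).aemeasurable)
      hindep
    have htail' : ∀ ω, (∏ k ∈ s, φ k (fun q => x q.1 ω)) = ψ (fun q => x q.1 ω) :=
      fun ω => congrFun htail ω
    simp only [htail']
    simpa [Function.comp] using this

lemma my_rpow_add_le {a b q : ℝ} (ha : 0 ≤ a) (hb : 0 ≤ b) (hq : 0 ≤ q) :
    (a + b) ^ q ≤ 2 ^ q * (a ^ q + b ^ q) := by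
  rcases le_total a b with h | h
  · calc (a + b) ^ q ≤ (2 * b) ^ q := by
          apply Real.rpow_le_rpow (by linarith) (by linarith) hq
      _ = 2 ^ q * b ^ q := Real.mul_rpow (by norm_num) hb
      _ ≤ 2 ^ q * (a ^ q + b ^ q) := by
          have := Real.rpow_nonneg ha q
          have h2 : (0:ℝ) ≤ 2 ^ q := Real.rpow_nonneg (by norm_num) q
          nlinarith
  · calc (a + b) ^ q ≤ (2 * a) ^ q := by
          apply Real.rpow_le_rpow (by linarith) (by linarith) hq
      _ = 2 ^ q * a ^ q := Real.mul_rpow (by norm_num) ha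
      _ ≤ 2 ^ q * (a ^ q + b ^ q) := by
          have := Real.rpow_nonneg hb q
          have h2 : (0:ℝ) ≤ 2 ^ q := Real.rpow_nonneg (by norm_num) q
          nlinarith

lemma my_jensen {ι : Type*} (b : Finset ι) (y : ι → ℝ) (hy : ∀ q ∈ b, 0 ≤ y q) {p : ℝ}
    (hp : 1 ≤ p) {N : ℕ} (hcard : b.card ≤ N) :
    ((2 / N) * ∑ q ∈ b, y q) ^ p ≤ (2 ^ p / b.card) * ∑ q ∈ b, (y q) ^ p := by
  rcases Finset.eq_empty_or_nonempty b with rfl | hne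
  · simp [Real.zero_rpow (by linarith : p ≠ 0)]
  have hc0 : (0:ℝ) < b.card := by exact_mod_cast Finset.card_pos.mpr hne
  have hN0 : (0:ℝ) < N := by
    have : 1 ≤ b.card := Finset.card_pos.mpr hne
    have : 1 ≤ N := le_trans this hcard
    exact_mod_cast Nat.lt_of_lt_of_le Nat.zero_lt_one this
  have key := Real.rpow_arith_mean_le_arith_mean_rpow b (fun _ => 1 / (b.card:ℝ))
    (fun q => (2 * b.card / N) * y q) (fun _ _ => by positivity)
    (by rw [Finset.sum_const, nsmul_eq_mul]; field_simp)
    (fun q hq => by have := hy q hq; positivity) hp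
  have hLHS : ∑ q ∈ b, (1 / (b.card:ℝ)) * ((2 * b.card / N) * y q) = (2 / N) * ∑ q ∈ b, y q := by
    rw [Finset.mul_sum]
    refine Finset.sum_congr rfl fun q _ => ?_
    field_simp
  have hfac : (2 * (b.card:ℝ) / N) ≤ 2 := by
    rw [div_le_iff₀ hN0]
    have : (b.card : ℝ) ≤ N := by exact_mod_cast hcard
    nlinarith
  have hRHS : ∑ q ∈ b, (1 / (b.card:ℝ)) * ((2 * b.card / N) * y q) ^ p
      ≤ (2 ^ p / b.card) * ∑ q ∈ b, (y q) ^ p := by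
    rw [Finset.mul_sum]
    refine Finset.sum_le_sum fun q hq => ?_
    rw [Real.mul_rpow (by positivity) (hy q hq)]
    have h1 : (2 * (b.card:ℝ) / N) ^ p ≤ 2 ^ p :=
      Real.rpow_le_rpow (by positivity) hfac (by linarith)
    have h2 : 0 ≤ (y q) ^ p := Real.rpow_nonneg (hy q hq) p
    calc 1 / (b.card:ℝ) * ((2 * b.card / N) ^ p * (y q) ^ p)
        ≤ 1 / (b.card:ℝ) * (2 ^ p * (y q) ^ p) := by
          apply mul_le_mul_of_nonneg_left _ (by positivity)
          exact mul_le_mul_of_nonneg_right h1 h2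
      _ = 2 ^ p / b.card * (y q) ^ p := by ring
  rw [← hLHS]
  exact le_trans key hRHS

lemma my_moment_bound {Ω : Type*} [MeasurableSpace Ω] {P : Measure Ω} [IsProbabilityMeasure P]
    {ι : Type*} (b : Finset ι) (x : ι → Ω → ℝ) (hxm : ∀ q, Measurable (x q))
    (μ : Measure ℝ) (hlaw : ∀ q ∈ b, Measure.map (x q) P = μ)
    {p : ℝ} (hp : 1 ≤ p) {N : ℕ} (hcard : b.card ≤ N) (c : ℝ) (hc : 0 ≤ c) :
    ∫⁻ ω, ENNReal.ofReal ((c + (2 / N) * ∑ q ∈ b, (x q ω)^2) ^ p) ∂P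
      ≤ ENNReal.ofReal (2 ^ p * c ^ p) +
        ENNReal.ofReal (4 ^ p) * ∫⁻ u, ENNReal.ofReal (|u| ^ (2 * p)) ∂μ := by
  have habs : ∀ (u : ℝ), ((u^2) : ℝ) ^ p = |u| ^ (2*p) := by
    intro u
    rw [← sq_abs, ← Real.rpow_natCast |u| 2, ← Real.rpow_mul (abs_nonneg u)]
    norm_num
  have hmu : Measurable fun u : ℝ => ENNReal.ofReal (|u| ^ (2*p)) := by
    exact ENNReal.measurable_ofReal.comp
      ((Real.continuous_rpow_const (by linarith)).measurable.comp measurable_abs)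
  -- pointwise bound
  have hpt : ∀ ω, ENNReal.ofReal ((c + (2 / N) * ∑ q ∈ b, (x q ω)^2) ^ p)
      ≤ ENNReal.ofReal (2 ^ p * c ^ p) +
        ENNReal.ofReal (4 ^ p / b.card) * ∑ q ∈ b, ENNReal.ofReal (|x q ω| ^ (2*p)) := by
    intro ω
    have hS0 : 0 ≤ (2 / (N:ℝ)) * ∑ q ∈ b, (x q ω)^2 := by positivity
    have h1 : (c + (2 / N) * ∑ q ∈ b, (x q ω)^2) ^ p
        ≤ 2 ^ p * c ^ p + 2 ^ p * ((2 / N) * ∑ q ∈ b, (x q ω)^2) ^ p := by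
      have := my_rpow_add_le hc hS0 (by linarith : (0:ℝ) ≤ p)
      linarith [this]
    have h2 : ((2 / (N:ℝ)) * ∑ q ∈ b, (x q ω)^2) ^ p
        ≤ (2 ^ p / b.card) * ∑ q ∈ b, ((x q ω)^2) ^ p :=
      my_jensen b _ (fun q _ => sq_nonneg _) hp hcard
    have h3 : (c + (2 / N) * ∑ q ∈ b, (x q ω)^2) ^ p
        ≤ 2 ^ p * c ^ p + (4 ^ p / b.card) * ∑ q ∈ b, ((x q ω)^2) ^ p := by
      have h2p : (0:ℝ) ≤ 2 ^ p := Real.rpow_nonneg (by norm_num) p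
      have h4 : 2 ^ p * ((2 ^ p / b.card) * ∑ q ∈ b, ((x q ω)^2) ^ p)
          = (2^p * 2^p / b.card) * ∑ q ∈ b, ((x q ω)^2) ^ p := by ring
      have h5 : (2:ℝ)^p * 2^p = 4^p := by
        rw [← Real.mul_rpow (by norm_num) (by norm_num)]; norm_num
      calc (c + (2 / N) * ∑ q ∈ b, (x q ω)^2) ^ p
          ≤ 2 ^ p * c ^ p + 2 ^ p * ((2 / N) * ∑ q ∈ b, (x q ω)^2) ^ p := h1
        _ ≤ 2 ^ p * c ^ p + 2 ^ p * ((2 ^ p / b.card) * ∑ q ∈ b, ((x q ω)^2) ^ p) := by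
            have := mul_le_mul_of_nonneg_left h2 h2p
            linarith
        _ = 2 ^ p * c ^ p + (4 ^ p / b.card) * ∑ q ∈ b, ((x q ω)^2) ^ p := by
            rw [h4, h5]
    calc ENNReal.ofReal ((c + (2 / N) * ∑ q ∈ b, (x q ω)^2) ^ p)
        ≤ ENNReal.ofReal (2 ^ p * c ^ p + (4 ^ p / b.card) * ∑ q ∈ b, ((x q ω)^2) ^ p) :=
          ENNReal.ofReal_le_ofReal h3
      _ ≤ ENNReal.ofReal (2 ^ p * c ^ p) +
            ENNReal.ofReal ((4 ^ p / b.card) * ∑ q ∈ b, ((x q ω)^2) ^ p) :=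
          ENNReal.ofReal_add_le
      _ = ENNReal.ofReal (2 ^ p * c ^ p) +
            ENNReal.ofReal (4 ^ p / b.card) * ∑ q ∈ b, ENNReal.ofReal (|x q ω| ^ (2*p)) := by
          congr 1
          rw [ENNReal.ofReal_mul (by positivity),
            ENNReal.ofReal_sum_of_nonneg (fun q _ => Real.rpow_nonneg (sq_nonneg _) p)]
          congr 1
          exact Finset.sum_congr rfl fun q _ => by rw [habs]
  calc ∫⁻ ω, ENNReal.ofReal ((c + (2 / N) * ∑ q ∈ b, (x q ω)^2) ^ p) ∂P
      ≤ ∫⁻ ω, (ENNReal.ofReal (2 ^ p * c ^ p) +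
          ENNReal.ofReal (4 ^ p / b.card) * ∑ q ∈ b, ENNReal.ofReal (|x q ω| ^ (2*p))) ∂P :=
        lintegral_mono hpt
    _ = ENNReal.ofReal (2 ^ p * c ^ p) +
          ENNReal.ofReal (4 ^ p / b.card) * ∑ q ∈ b, ∫⁻ ω, ENNReal.ofReal (|x q ω| ^ (2*p)) ∂P := by
        have hqm : ∀ q ∈ b, Measurable fun ω => ENNReal.ofReal (|x q ω| ^ (2*p)) :=
          fun q _ => hmu.comp (hxm q)
        have hsm : Measurable fun ω => ∑ q ∈ b, ENNReal.ofReal (|x q ω| ^ (2*p)) :=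
          Finset.measurable_sum b hqm
        rw [lintegral_add_left measurable_const, lintegral_const]
        simp only [measure_univ, mul_one]
        rw [lintegral_const_mul _ hsm, lintegral_finset_sum b hqm]
    _ ≤ ENNReal.ofReal (2 ^ p * c ^ p) +
          ENNReal.ofReal (4 ^ p) * ∫⁻ u, ENNReal.ofReal (|u| ^ (2*p)) ∂μ := by
        gcongr ?_ + ?_
        · exact le_rfl
        have hint : ∀ q ∈ b, ∫⁻ ω, ENNReal.ofReal (|x q ω| ^ (2*p)) ∂P
            = ∫⁻ u, ENNReal.ofReal (|u| ^ (2*p)) ∂μ := by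
          intro q hq
          rw [← hlaw q hq, lintegral_map hmu (hxm q)]
        rw [Finset.sum_congr rfl hint, Finset.sum_const, nsmul_eq_mul]
        rw [← mul_assoc]
        gcongr
        rw [show ((b.card : ℕ) : ENNReal) = ENNReal.ofReal (b.card : ℝ) by
          simp [ENNReal.ofReal_natCast]]
        rw [← ENNReal.ofReal_mul (by positivity)]
        apply ENNReal.ofReal_le_ofReal
        rcases Nat.eq_zero_or_pos b.card with h0 | hpos
        · simp [h0]
          positivity
        · have : (0:ℝ) < b.card := by exact_mod_cast hpos
          rw [div_mul_cancel₀ _ this.ne']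

lemma my_ofReal_prod {ι : Type*} (s : Finset ι) (f : ι → ℝ) (h : ∀ i ∈ s, 0 ≤ f i) :
    ENNReal.ofReal (∏ i ∈ s, f i) = ∏ i ∈ s, ENNReal.ofReal (f i) := by
  classical
  induction s using Finset.induction_on with
  | empty => simp
  | @insert a s ha ih =>
    rw [Finset.prod_insert ha, Finset.prod_insert ha,
      ENNReal.ofReal_mul (h a (Finset.mem_insert_self a s)),
      ih (fun i hi => h i (Finset.mem_insert_of_mem hi))]

lemma my_rpow_half_sq {p u : ℝ} (hu : 0 ≤ u) : (u ^ (p/2)) ^ 2 = u ^ p := by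
  rw [← Real.rpow_natCast (u ^ (p/2)) 2, ← Real.rpow_mul hu]
  norm_num

lemma my_sq_rpow_half (p u : ℝ) : (u^2) ^ (p/2) = |u| ^ p := by
  rw [← sq_abs, ← Real.rpow_natCast |u| 2, ← Real.rpow_mul (abs_nonneg u)]
  ring_nf

lemma my_family_bound {Ω : Type*} [MeasurableSpace Ω] {P : Measure Ω} [IsProbabilityMeasure P]
    {Q : Type*} (x : Q → Ω → ℝ)
    (hx : iIndepFun x P) (hxm : ∀ q, Measurable (x q))
    (μ : Measure ℝ) (hlaw : ∀ q, Measure.map (x q) P = μ)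
    {p : ℝ} (hp : 1 ≤ p) {N : ℕ} (b : Fin N → Finset Q)
    (hdisj : ∀ k l, k ≠ l → Disjoint (b k) (b l))
    (hcard : ∀ i, (b i).card ≤ N) (c : ℝ) (hc : 0 ≤ c) (S : Finset (Fin N)) :
    ∫⁻ ω, ∏ i ∈ S, ENNReal.ofReal ((c + (2 / N) * ∑ q ∈ b i, (x q ω)^2) ^ p) ∂P
      ≤ (ENNReal.ofReal (2 ^ p * c ^ p) +
          ENNReal.ofReal (4 ^ p) * (∫⁻ u, ENNReal.ofReal (|u| ^ (2 * p)) ∂μ) + 1) ^ N := by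
  classical
  set K : ENNReal := ENNReal.ofReal (2 ^ p * c ^ p) +
      ENNReal.ofReal (4 ^ p) * (∫⁻ u, ENNReal.ofReal (|u| ^ (2 * p)) ∂μ) + 1 with hK
  have hK1 : 1 ≤ K := le_add_self
  set φ : ∀ i : Fin N, ({q // q ∈ b i} → ℝ) → ENNReal :=
    fun i v => ENNReal.ofReal ((c + (2 / N) * ∑ q ∈ (b i).attach, (v q)^2) ^ p) with hφdef
  have hφm : ∀ i, Measurable (φ i) := by
    intro i
    apply ENNReal.measurable_ofReal.comp
    apply ((Real.continuous_rpow_const (by linarith : (0:ℝ) ≤ p)).measurable).comp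
    apply Measurable.const_add
    apply Measurable.const_mul
    exact Finset.measurable_sum _ fun q _ => (measurable_pi_apply q).pow_const 2
  have hrepr : ∀ i ω, ENNReal.ofReal ((c + (2 / N) * ∑ q ∈ b i, (x q ω)^2) ^ p)
      = φ i (fun q => x q.1 ω) := by
    intro i ω
    rw [hφdef]
    congr 2
    rw [← Finset.sum_attach (b i) (fun q => (x q ω)^2)]
  calc ∫⁻ ω, ∏ i ∈ S, ENNReal.ofReal ((c + (2 / N) * ∑ q ∈ b i, (x q ω)^2) ^ p) ∂P
      = ∫⁻ ω, ∏ i ∈ S, φ i (fun q => x q.1 ω) ∂P := by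
        simp only [hrepr]
    _ = ∏ i ∈ S, ∫⁻ ω, φ i (fun q => x q.1 ω) ∂P :=
        my_lintegral_prod_blocks hx hxm b hdisj φ hφm S
    _ ≤ ∏ i ∈ S, K := by
        refine Finset.prod_le_prod' fun i _ => ?_
        have h1 : ∫⁻ ω, φ i (fun q => x q.1 ω) ∂P
            = ∫⁻ ω, ENNReal.ofReal ((c + (2 / N) * ∑ q ∈ b i, (x q ω)^2) ^ p) ∂P := by
          simp only [hrepr]
        rw [h1, hK]
        refine le_trans (my_moment_bound (b i) x hxm μ (fun q _ => hlaw q) hp (hcard i) c hc) ?_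
        exact le_self_add
    _ = K ^ S.card := Finset.prod_const K
    _ ≤ K ^ N := pow_le_pow_right₀ hK1 (le_trans (Finset.card_le_card (Finset.subset_univ S))
        (by simp))

/-- `H` is an `N×N` real symmetric Wigner matrix associated with `μ`: it is symmetric, the
entries `(√N · H_{ij})_{i≤j}` are independent, and each has law `μ`. -/
def IsWigner {Ω : Type*} [MeasurableSpace Ω] (P : Measure Ω) (μ : Measure ℝ) (N : ℕ)
    (H : Ω → Matrix (Fin N) (Fin N) ℝ) : Prop :=
  (∀ ω, (H ω).IsHermitian) ∧
  iIndepFun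
    (fun (p : {q : Fin N × Fin N // q.1 ≤ q.2}) ω => Real.sqrt N * H ω p.1.1 p.1.2) P ∧
  (∀ i j : Fin N, i ≤ j → Measure.map (fun ω => Real.sqrt N * H ω i j) P = μ)

/-- If `μ` has finite `2p`-th moment, then `limsup_N (1/N) log E[|det(H_N − E)|^p] < ∞`:
there is a constant `C` such that eventually `E[|det(H_N − E)|^p] ≤ e^{CN}`. -/
theorem det_moment_exponentially_finite_of_finite_moment
    (p E : ℝ) (hp : 1 ≤ p)
    (μ : Measure ℝ) [IsProbabilityMeasure μ]
    (hmom : ∫⁻ x, ENNReal.ofReal (|x| ^ (2 * p)) ∂μ ≠ ⊤)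
    (Ω : ℕ → Type*) (mΩ : ∀ N, MeasurableSpace (Ω N))
    (P : ∀ N, Measure (Ω N)) (hP : ∀ N, IsProbabilityMeasure (P N))
    (H : ∀ N, Ω N → Matrix (Fin N) (Fin N) ℝ)
    (hmeas : ∀ N, ∀ i j, Measurable fun ω => H N ω i j)
    (hW : ∀ N, IsWigner (P N) μ N (H N)) :
    ∃ C : ℝ, ∀ᶠ N : ℕ in atTop,
      ∫⁻ ω, ENNReal.ofReal (|(H N ω - E • (1 : Matrix (Fin N) (Fin N) ℝ)).det| ^ p) ∂(P N)
        ≤ ENNReal.ofReal (Real.exp (C * N)) := by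
  classical
  set m' : ENNReal := ∫⁻ x, ENNReal.ofReal (|x| ^ (2 * p)) ∂μ with hm'
  set KA : ENNReal := ENNReal.ofReal (2^p * (2*E^2)^p) + ENNReal.ofReal (4^p) * m' + 1 with hKA
  set KB : ENNReal := ENNReal.ofReal (2^p * (0:ℝ)^p) + ENNReal.ofReal (4^p) * m' + 1 with hKB
  set K : ENNReal := KA + KB with hKdef
  have hKAle : KA ≤ K := le_self_add
  have hKBle : KB ≤ K := le_add_self
  have hK1 : 1 ≤ K := le_add_self.trans (le_self_add (a := KA) (b := KB))
  have hKtop : K ≠ ⊤ := by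
    rw [hKdef, hKA, hKB]
    exact ENNReal.add_ne_top.mpr
      ⟨ENNReal.add_ne_top.mpr ⟨ENNReal.add_ne_top.mpr
          ⟨ENNReal.ofReal_ne_top, ENNReal.mul_ne_top ENNReal.ofReal_ne_top hmom⟩,
        ENNReal.one_ne_top⟩,
       ENNReal.add_ne_top.mpr ⟨ENNReal.add_ne_top.mpr
          ⟨ENNReal.ofReal_ne_top, ENNReal.mul_ne_top ENNReal.ofReal_ne_top hmom⟩,
        ENNReal.one_ne_top⟩⟩
  set R : ENNReal := ENNReal.ofReal (2 ^ (p/2)) * 2 * K with hRdef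
  have h2p1 : (1:ℝ) ≤ 2 ^ (p/2) := by
    have := Real.rpow_le_rpow_of_exponent_le (x := 2) one_le_two
      (by linarith : (0:ℝ) ≤ p/2)
    simpa using this
  have hR1 : 1 ≤ R := by
    calc (1:ENNReal) = 1 * 1 * 1 := by norm_num
      _ ≤ ENNReal.ofReal (2 ^ (p/2)) * 2 * K := by
          gcongr
          · exact ENNReal.one_le_ofReal.mpr h2p1
          · exact one_le_two
  have hRtop : R ≠ ⊤ := by
    rw [hRdef]
    exact ENNReal.mul_ne_top (ENNReal.mul_ne_top ENNReal.ofReal_ne_top (by norm_num)) hKtop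
  set r : ℝ := R.toReal with hrdef
  have hr1 : (1:ℝ) ≤ r := by
    have := ENNReal.toReal_mono hRtop hR1
    simpa using this
  have hrpos : (0:ℝ) < r := lt_of_lt_of_le one_pos hr1
  refine ⟨Real.log r, eventually_atTop.mpr ⟨1, fun N hN1 => ?_⟩⟩
  -- key2 : R ^ N = ofReal (exp (log r * N))
  have key2 : ENNReal.ofReal (Real.exp (Real.log r * N)) = R ^ N := by
    rw [mul_comm, Real.exp_nat_mul, Real.exp_log hrpos,
      ENNReal.ofReal_pow (le_of_lt hrpos), hrdef, ENNReal.ofReal_toReal hRtop]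
  -- setup
  have hNR : (0:ℝ) < N := by exact_mod_cast hN1
  set Q := {q : Fin N × Fin N // q.1 ≤ q.2} with hQ
  set x : Q → Ω N → ℝ := fun q ω => Real.sqrt N * H N ω q.1.1 q.1.2 with hx_def
  have hxm : ∀ q, Measurable (x q) := fun q => (hmeas N q.1.1 q.1.2).const_mul _
  have hindep : iIndepFun x (P N) := (hW N).2.1
  have hlaw : ∀ q, Measure.map (x q) (P N) = μ := fun q => (hW N).2.2 q.1.1 q.1.2 q.2
  have hsym : ∀ ω (i j : Fin N), H N ω j i = H N ω i j := by
    intro ω i j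
    have := ((hW N).1 ω).apply i j
    simpa using this
  set bA : Fin N → Finset Q := fun i => Finset.univ.filter (fun q => q.1.2 = i) with hbA
  set bB : Fin N → Finset Q := fun i => Finset.univ.filter (fun q => q.1.1 = i ∧ q.1.2 ≠ i)
    with hbB
  have hdisjA : ∀ k l, k ≠ l → Disjoint (bA k) (bA l) := by
    intro k l hkl
    refine Finset.disjoint_left.mpr fun q hq1 hq2 => ?_
    simp only [hbA, Finset.mem_filter] at hq1 hq2
    exact hkl (hq1.2 ▸ hq2.2 ▸ rfl)
  have hdisjB : ∀ k l, k ≠ l → Disjoint (bB k) (bB l) := by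
    intro k l hkl
    refine Finset.disjoint_left.mpr fun q hq1 hq2 => ?_
    simp only [hbB, Finset.mem_filter] at hq1 hq2
    exact hkl (hq1.2.1 ▸ hq2.2.1 ▸ rfl)
  have hcardA : ∀ i, (bA i).card ≤ N := by
    intro i
    have : (bA i).card ≤ (Finset.univ : Finset (Fin N)).card := by
      apply Finset.card_le_card_of_injOn (fun q => q.1.1) (fun q _ => Finset.mem_univ _)
      intro q1 hq1 q2 hq2 h
      simp only [hbA, Finset.mem_coe, Finset.mem_filter] at hq1 hq2
      exact Subtype.ext (Prod.ext h (hq1.2.trans hq2.2.symm))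
    simpa using this
  have hcardB : ∀ i, (bB i).card ≤ N := by
    intro i
    have : (bB i).card ≤ (Finset.univ : Finset (Fin N)).card := by
      apply Finset.card_le_card_of_injOn (fun q => q.1.2) (fun q _ => Finset.mem_univ _)
      intro q1 hq1 q2 hq2 h
      simp only [hbB, Finset.mem_coe, Finset.mem_filter] at hq1 hq2
      exact Subtype.ext (Prod.ext (hq1.2.1.trans hq2.2.1.symm) h)
    simpa using this
  set A : Fin N → Ω N → ℝ := fun i ω => 2*E^2 + (2 / N) * ∑ q ∈ bA i, (x q ω)^2 with hA_def
  set B : Fin N → Ω N → ℝ := fun i ω => (2 / N) * ∑ q ∈ bB i, (x q ω)^2 with hB_def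
  have hA0 : ∀ i ω, 0 ≤ A i ω := by
    intro i ω; rw [hA_def]
    have : (0:ℝ) ≤ ∑ q ∈ bA i, (x q ω)^2 := Finset.sum_nonneg fun q _ => sq_nonneg _
    positivity
  have hB0 : ∀ i ω, 0 ≤ B i ω := by
    intro i ω; rw [hB_def]
    have : (0:ℝ) ≤ ∑ q ∈ bB i, (x q ω)^2 := Finset.sum_nonneg fun q _ => sq_nonneg _
    positivity
  -- row bound
  have h_t_le : ∀ ω (i : Fin N),
      (∑ j, ((H N ω - E • (1 : Matrix (Fin N) (Fin N) ℝ)) i j)^2) ≤ A i ω + B i ω := by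
    intro ω i
    have hstep1 : ∑ j, ((H N ω - E • (1 : Matrix (Fin N) (Fin N) ℝ)) i j)^2
        ≤ 2*E^2 + 2 * ∑ j, (H N ω i j)^2 := by
      have hb : ∀ j : Fin N, ((H N ω - E • (1 : Matrix (Fin N) (Fin N) ℝ)) i j)^2
          ≤ 2*(H N ω i j)^2 + (if i = j then 2*E^2 else 0) := by
        intro j
        rw [Matrix.sub_apply, Matrix.smul_apply, Matrix.one_apply, smul_eq_mul]
        by_cases h : i = j
        · rw [if_pos h, if_pos h, mul_one]
          nlinarith [sq_nonneg (H N ω i j + E)]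
        · rw [if_neg h, if_neg h, mul_zero, sub_zero]
          nlinarith [sq_nonneg (H N ω i j)]
      calc ∑ j, ((H N ω - E • (1 : Matrix (Fin N) (Fin N) ℝ)) i j)^2
          ≤ ∑ j, (2*(H N ω i j)^2 + (if i = j then 2*E^2 else 0)) :=
            Finset.sum_le_sum fun j _ => hb j
        _ = 2*E^2 + 2 * ∑ j, (H N ω i j)^2 := by
            rw [Finset.sum_add_distrib, Finset.sum_ite_eq]
            simp [Finset.mul_sum]
            ring
    have hxsq : ∀ q : Q, (x q ω)^2 = N * (H N ω q.1.1 q.1.2)^2 := by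
      intro q
      rw [hx_def, mul_pow, Real.sq_sqrt (Nat.cast_nonneg N)]
    have hsumA : (2 / (N:ℝ)) * ∑ q ∈ bA i, (x q ω)^2
        = 2 * ∑ j ∈ Finset.univ.filter (fun j => j ≤ i), (H N ω i j)^2 := by
      rw [Finset.sum_congr rfl (fun q _ => hxsq q), ← Finset.mul_sum]
      have hbij : ∑ q ∈ bA i, (H N ω q.1.1 q.1.2)^2
          = ∑ j ∈ Finset.univ.filter (fun j => j ≤ i), (H N ω i j)^2 :=
        Finset.sum_bij' (i := fun q _ => q.1.1)
          (j := fun j hj => (⟨(j, i), by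
            simp only [Finset.mem_filter] at hj; exact hj.2⟩ : Q))
          (hi := fun q hq => by
            simp only [hbA, Finset.mem_filter] at hq
            simp only [Finset.mem_filter, Finset.mem_univ, true_and]
            exact hq.2 ▸ q.2)
          (hj := fun j hj => by
            simp only [hbA, Finset.mem_filter, Finset.mem_univ, true_and])
          (left_neg := fun q hq => by
            simp only [hbA, Finset.mem_filter] at hq
            exact Subtype.ext (Prod.ext rfl hq.2.symm))
          (right_neg := fun j hj => rfl)
          (h := fun q hq => by
            simp only [hbA, Finset.mem_filter] at hq
            have h2 : q.1.2 = i := hq.2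
            rw [h2, hsym ω i q.1.1])
      rw [hbij]
      field_simp
    have hsumB : (2 / (N:ℝ)) * ∑ q ∈ bB i, (x q ω)^2
        = 2 * ∑ j ∈ Finset.univ.filter (fun j => ¬ (j ≤ i)), (H N ω i j)^2 := by
      rw [Finset.sum_congr rfl (fun q _ => hxsq q), ← Finset.mul_sum]
      have hbij : ∑ q ∈ bB i, (H N ω q.1.1 q.1.2)^2
          = ∑ j ∈ Finset.univ.filter (fun j => ¬ (j ≤ i)), (H N ω i j)^2 :=
        Finset.sum_bij' (i := fun q _ => q.1.2)
          (j := fun j hj => (⟨(i, j), by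
            simp only [Finset.mem_filter, Finset.mem_univ, true_and] at hj
            exact le_of_lt (lt_of_not_ge hj)⟩ : Q))
          (hi := fun q hq => by
            simp only [hbB, Finset.mem_filter] at hq
            simp only [Finset.mem_filter, Finset.mem_univ, true_and]
            intro hle
            exact hq.2.2 (le_antisymm hle (hq.2.1 ▸ q.2))
          )
          (hj := fun j hj => by
            simp only [Finset.mem_filter, Finset.mem_univ, true_and] at hj
            simp only [hbB, Finset.mem_filter, Finset.mem_univ, true_and]
            first
              | exact ⟨rfl, fun h => hj (h ▸ le_refl i)⟩
              | exact fun h => hj (h ▸ le_refl i))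
          (left_neg := fun q hq => by
            simp only [hbB, Finset.mem_filter] at hq
            exact Subtype.ext (Prod.ext hq.2.1.symm rfl))
          (right_neg := fun j hj => rfl)
          (h := fun q hq => by
            simp only [hbB, Finset.mem_filter] at hq
            have h1 : q.1.1 = i := hq.2.1
            rw [h1])
      rw [hbij]
      field_simp
    have hsplit : ∑ j, (H N ω i j)^2
        = ∑ j ∈ Finset.univ.filter (fun j => j ≤ i), (H N ω i j)^2
          + ∑ j ∈ Finset.univ.filter (fun j => ¬ (j ≤ i)), (H N ω i j)^2 :=
      (Finset.sum_filter_add_sum_filter_not _ _ _).symm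
    have : A i ω + B i ω = 2*E^2 + 2 * ∑ j, (H N ω i j)^2 := by
      rw [hA_def, hB_def]
      simp only []
      rw [hsumA, hsumB, hsplit]
      ring
    rw [this]
    exact hstep1
  -- ENNReal row factors
  set at' : Fin N → Ω N → ENNReal := fun i ω => ENNReal.ofReal ((A i ω) ^ (p/2)) with hat
  set bt : Fin N → Ω N → ENNReal := fun i ω => ENNReal.ofReal ((B i ω) ^ (p/2)) with hbt
  have hAm : ∀ i, Measurable (A i) := by
    intro i
    rw [hA_def]
    exact measurable_const.add
      ((Finset.measurable_sum _ fun q _ => (hxm q).pow_const 2).const_mul _)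
  have hBm : ∀ i, Measurable (B i) := by
    intro i
    rw [hB_def]
    exact (Finset.measurable_sum _ fun q _ => (hxm q).pow_const 2).const_mul _
  have hatm : ∀ i, Measurable (at' i) := fun i =>
    ENNReal.measurable_ofReal.comp
      (((Real.continuous_rpow_const (by linarith : (0:ℝ) ≤ p/2)).measurable).comp (hAm i))
  have hbtm : ∀ i, Measurable (bt i) := fun i =>
    ENNReal.measurable_ofReal.comp
      (((Real.continuous_rpow_const (by linarith : (0:ℝ) ≤ p/2)).measurable).comp (hBm i))
  -- pointwise bound
  have hpoint : ∀ ω, ENNReal.ofReal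
        (|(H N ω - E • (1 : Matrix (Fin N) (Fin N) ℝ)).det| ^ p)
      ≤ ENNReal.ofReal (2 ^ (p/2)) ^ N * ∏ i, (at' i ω + bt i ω) := by
    intro ω
    set M := H N ω - E • (1 : Matrix (Fin N) (Fin N) ℝ) with hM
    have ht0 : ∀ i, (0:ℝ) ≤ ∑ j, (M i j)^2 := fun i => Finset.sum_nonneg fun j _ => sq_nonneg _
    have hreal : |M.det| ^ p ≤ ∏ i, (2 ^ (p/2) * ((A i ω)^(p/2) + (B i ω)^(p/2))) := by
      have h1 : |M.det| ^ p = (M.det ^ 2) ^ (p/2) := (my_sq_rpow_half p M.det).symm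
      have h2 : (M.det ^ 2) ^ (p/2) ≤ (∏ i, ∑ j, (M i j)^2) ^ (p/2) :=
        Real.rpow_le_rpow (sq_nonneg _) (my_hadamard M) (by linarith)
      have h3 : (∏ i, ∑ j, (M i j)^2) ^ (p/2) = ∏ i, (∑ j, (M i j)^2) ^ (p/2) :=
        (Real.finset_prod_rpow _ _ (fun i _ => ht0 i) _).symm
      have h4 : ∏ i, (∑ j, (M i j)^2) ^ (p/2)
          ≤ ∏ i, (2 ^ (p/2) * ((A i ω)^(p/2) + (B i ω)^(p/2))) := by
        apply Finset.prod_le_prod (fun i _ => Real.rpow_nonneg (ht0 i) _)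
        intro i _
        calc (∑ j, (M i j)^2) ^ (p/2) ≤ (A i ω + B i ω) ^ (p/2) :=
              Real.rpow_le_rpow (ht0 i) (h_t_le ω i) (by linarith)
          _ ≤ 2 ^ (p/2) * ((A i ω)^(p/2) + (B i ω)^(p/2)) :=
              my_rpow_add_le (hA0 i ω) (hB0 i ω) (by linarith)
      rw [h3] at h2
      rw [h1]
      exact le_trans h2 h4
    calc ENNReal.ofReal (|M.det| ^ p)
        ≤ ENNReal.ofReal (∏ i, (2 ^ (p/2) * ((A i ω)^(p/2) + (B i ω)^(p/2)))) :=
          ENNReal.ofReal_le_ofReal hreal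
      _ = ∏ i, ENNReal.ofReal (2 ^ (p/2) * ((A i ω)^(p/2) + (B i ω)^(p/2))) := by
          apply my_ofReal_prod
          intro i _
          have h5 : (0:ℝ) ≤ (A i ω)^(p/2) := Real.rpow_nonneg (hA0 i ω) _
          have h6 : (0:ℝ) ≤ (B i ω)^(p/2) := Real.rpow_nonneg (hB0 i ω) _
          have h7 : (0:ℝ) ≤ 2 ^ (p/2) := Real.rpow_nonneg (by norm_num) _
          nlinarith
      _ = ∏ i, (ENNReal.ofReal (2 ^ (p/2)) * (at' i ω + bt i ω)) := by
          refine Finset.prod_congr rfl fun i _ => ?_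
          rw [ENNReal.ofReal_mul (Real.rpow_nonneg (by norm_num) _),
            ENNReal.ofReal_add (Real.rpow_nonneg (hA0 i ω) _) (Real.rpow_nonneg (hB0 i ω) _)]
      _ = ENNReal.ofReal (2 ^ (p/2)) ^ N * ∏ i, (at' i ω + bt i ω) := by
          rw [Finset.prod_mul_distrib, Finset.prod_const, Finset.card_univ, Fintype.card_fin]
  -- per-subset Cauchy-Schwarz bound
  have perS : ∀ S : Finset (Fin N),
      ∫⁻ ω, (∏ i ∈ S, at' i ω) * ∏ i ∈ Finset.univ \ S, bt i ω ∂(P N) ≤ K ^ N := by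
    intro S
    have hFm : Measurable (fun ω => ∏ i ∈ S, at' i ω) :=
      Finset.measurable_prod _ fun i _ => hatm i
    have hGm : Measurable (fun ω => ∏ i ∈ Finset.univ \ S, bt i ω) :=
      Finset.measurable_prod _ fun i _ => hbtm i
    have hconj : Real.HolderConjugate 2 2 := Real.HolderConjugate.two_two
    have hH := ENNReal.lintegral_mul_le_Lp_mul_Lq (P N) hconj hFm.aemeasurable hGm.aemeasurable
    have hF2 : ∀ ω, (∏ i ∈ S, at' i ω) ^ (2:ℝ) = ∏ i ∈ S, ENNReal.ofReal ((A i ω)^p) := by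
      intro ω
      rw [show (2:ℝ) = ((2:ℕ):ℝ) by norm_num, ENNReal.rpow_natCast, ← Finset.prod_pow]
      refine Finset.prod_congr rfl fun i _ => ?_
      rw [hat]
      rw [← ENNReal.ofReal_pow (Real.rpow_nonneg (hA0 i ω) _), my_rpow_half_sq (hA0 i ω)]
    have hG2 : ∀ ω, (∏ i ∈ Finset.univ \ S, bt i ω) ^ (2:ℝ)
        = ∏ i ∈ Finset.univ \ S, ENNReal.ofReal ((B i ω)^p) := by
      intro ω
      rw [show (2:ℝ) = ((2:ℕ):ℝ) by norm_num, ENNReal.rpow_natCast, ← Finset.prod_pow]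
      refine Finset.prod_congr rfl fun i _ => ?_
      rw [hbt]
      rw [← ENNReal.ofReal_pow (Real.rpow_nonneg (hB0 i ω) _), my_rpow_half_sq (hB0 i ω)]
    have hFA : ∫⁻ ω, (∏ i ∈ S, at' i ω) ^ (2:ℝ) ∂(P N) ≤ K ^ N := by
      calc ∫⁻ ω, (∏ i ∈ S, at' i ω) ^ (2:ℝ) ∂(P N)
          = ∫⁻ ω, ∏ i ∈ S, ENNReal.ofReal ((A i ω)^p) ∂(P N) :=
            lintegral_congr fun ω => hF2 ω
        _ ≤ KA ^ N := by
            have hfb := my_family_bound x hindep hxm μ hlaw hp bA hdisjA hcardA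
              (2*E^2) (by positivity) S
            rw [hKA, hm']
            exact hfb
        _ ≤ K ^ N := pow_le_pow_left' hKAle N
    have hGB : ∫⁻ ω, (∏ i ∈ Finset.univ \ S, bt i ω) ^ (2:ℝ) ∂(P N) ≤ K ^ N := by
      calc ∫⁻ ω, (∏ i ∈ Finset.univ \ S, bt i ω) ^ (2:ℝ) ∂(P N)
          = ∫⁻ ω, ∏ i ∈ Finset.univ \ S, ENNReal.ofReal ((B i ω)^p) ∂(P N) :=
            lintegral_congr fun ω => hG2 ω
        _ ≤ KB ^ N := by
            have hfb := my_family_bound x hindep hxm μ hlaw hp bB hdisjB hcardB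
              0 le_rfl (Finset.univ \ S)
            rw [hKB, hm']
            simpa only [zero_add] using hfb
        _ ≤ K ^ N := pow_le_pow_left' hKBle N
    calc ∫⁻ ω, (∏ i ∈ S, at' i ω) * ∏ i ∈ Finset.univ \ S, bt i ω ∂(P N)
        ≤ (∫⁻ ω, (∏ i ∈ S, at' i ω) ^ (2:ℝ) ∂(P N)) ^ (1/(2:ℝ))
          * (∫⁻ ω, (∏ i ∈ Finset.univ \ S, bt i ω) ^ (2:ℝ) ∂(P N)) ^ (1/(2:ℝ)) := hH
      _ ≤ (K ^ N) ^ (1/(2:ℝ)) * (K ^ N) ^ (1/(2:ℝ)) := by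
          exact mul_le_mul' (ENNReal.rpow_le_rpow hFA (by norm_num))
            (ENNReal.rpow_le_rpow hGB (by norm_num))
      _ = K ^ N := by
          rw [← ENNReal.rpow_add_of_nonneg _ _ (by norm_num) (by norm_num)]
          norm_num
  -- main integral bound
  have hmain : ∫⁻ ω, ENNReal.ofReal
        (|(H N ω - E • (1 : Matrix (Fin N) (Fin N) ℝ)).det| ^ p) ∂(P N) ≤ R ^ N := by
    have hprodm : Measurable (fun ω => ∏ i, (at' i ω + bt i ω)) :=
      Finset.measurable_prod _ fun i _ => (hatm i).add (hbtm i)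
    have hexp : ∀ ω : Ω N, ∏ i, (at' i ω + bt i ω)
        = ∑ S ∈ (Finset.univ : Finset (Fin N)).powerset,
            (∏ i ∈ S, at' i ω) * ∏ i ∈ Finset.univ \ S, bt i ω := fun ω =>
      Finset.prod_add _ _ _
    have hint : ∫⁻ ω, ∏ i, (at' i ω + bt i ω) ∂(P N) ≤ 2 ^ N * K ^ N := by
      calc ∫⁻ ω, ∏ i, (at' i ω + bt i ω) ∂(P N)
          = ∑ S ∈ (Finset.univ : Finset (Fin N)).powerset,
              ∫⁻ ω, (∏ i ∈ S, at' i ω) * ∏ i ∈ Finset.univ \ S, bt i ω ∂(P N) := by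
            rw [lintegral_congr fun ω => hexp ω]
            exact lintegral_finset_sum _ fun S _ =>
              (Finset.measurable_prod _ fun i _ => hatm i).mul
                (Finset.measurable_prod _ fun i _ => hbtm i)
        _ ≤ ∑ S ∈ (Finset.univ : Finset (Fin N)).powerset, K ^ N :=
            Finset.sum_le_sum fun S _ => perS S
        _ = 2 ^ N * K ^ N := by
            rw [Finset.sum_const, Finset.card_powerset, Finset.card_univ, Fintype.card_fin,
              nsmul_eq_mul]
            norm_num
    calc ∫⁻ ω, ENNReal.ofReal
          (|(H N ω - E • (1 : Matrix (Fin N) (Fin N) ℝ)).det| ^ p) ∂(P N)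
        ≤ ∫⁻ ω, ENNReal.ofReal (2 ^ (p/2)) ^ N * ∏ i, (at' i ω + bt i ω) ∂(P N) :=
          lintegral_mono hpoint
      _ = ENNReal.ofReal (2 ^ (p/2)) ^ N * ∫⁻ ω, ∏ i, (at' i ω + bt i ω) ∂(P N) :=
          lintegral_const_mul _ hprodm
      _ ≤ ENNReal.ofReal (2 ^ (p/2)) ^ N * (2 ^ N * K ^ N) := by
          exact mul_le_mul_right hint _
      _ = R ^ N := by
          rw [hRdef, mul_pow, mul_pow, mul_assoc]
  rw [key2]
  exact hmain
end

section
/- For any real numbers a, b ≥ 0 and p ≥ 1, the function f : [0,∞) → [0,∞) given by f(x) = (a + x^{1/p})^{p/2} · (b + x^{1/p})^{p/2} is concave. -/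
open Real Set

/-- Geometric mean of two nonneg concave functions is concave. -/
lemma sqrtMulConcave {s : Set ℝ} {g h : ℝ → ℝ} (hg : ConcaveOn ℝ s g) (hh : ConcaveOn ℝ s h)
    (hg0 : ∀ x ∈ s, 0 ≤ g x) (hh0 : ∀ x ∈ s, 0 ≤ h x) :
    ConcaveOn ℝ s (fun x => Real.sqrt (g x) * Real.sqrt (h x)) := by
  refine ⟨hg.1, fun x hx y hy u v hu hv huv => ?_⟩
  have hz : u • x + v • y ∈ s := hg.1 hx hy hu hv huv
  have hgz : u * g x + v * g y ≤ g (u • x + v • y) := hg.2 hx hy hu hv huv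
  have hhz : u * h x + v * h y ≤ h (u • x + v • y) := hh.2 hx hy hu hv huv
  simp only [smul_eq_mul]
  have hgx := hg0 x hx; have hgy := hg0 y hy; have hhx := hh0 x hx; have hhy := hh0 y hy
  have h1 : u * (Real.sqrt (g x) * Real.sqrt (h x)) + v * (Real.sqrt (g y) * Real.sqrt (h y))
      ≤ Real.sqrt ((u * g x + v * g y) * (u * h x + v * h y)) := by
    rw [Real.le_sqrt (by positivity) (by positivity)]
    have e1 : Real.sqrt (g x) ^ 2 = g x := Real.sq_sqrt hgx
    have e2 : Real.sqrt (g y) ^ 2 = g y := Real.sq_sqrt hgy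
    have e3 : Real.sqrt (h x) ^ 2 = h x := Real.sq_sqrt hhx
    have e4 : Real.sqrt (h y) ^ 2 = h y := Real.sq_sqrt hhy
    have key : ∀ A B C D : ℝ, (u*(A*C)+v*(B*D))^2 ≤ (u*A^2+v*B^2)*(u*C^2+v*D^2) := by
      intro A B C D
      nlinarith [mul_nonneg (mul_nonneg hu hv) (sq_nonneg (A*D-B*C))]
    have := key (Real.sqrt (g x)) (Real.sqrt (g y)) (Real.sqrt (h x)) (Real.sqrt (h y))
    rw [e1, e2, e3, e4] at this
    exact this
  have h2 : Real.sqrt ((u * g x + v * g y) * (u * h x + v * h y))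
      ≤ Real.sqrt (g (u • x + v • y)) * Real.sqrt (h (u • x + v • y)) := by
    rw [← Real.sqrt_mul (hg0 _ hz)]
    exact Real.sqrt_le_sqrt (mul_le_mul hgz hhz (by positivity) (hg0 _ hz))
  exact h1.trans h2

lemma base_concave (c p : ℝ) (hc : 0 ≤ c) (hp : 1 ≤ p) :
    ConcaveOn ℝ (Set.Ici (0:ℝ)) (fun x : ℝ => (c + x ^ (1/p)) ^ p) := by
  have hp0 : 0 < p := lt_of_lt_of_le one_pos hp
  have hderiv : ∀ x ∈ interior (Set.Ici (0:ℝ)),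
      HasDerivAt (fun x : ℝ => (c + x ^ (1/p)) ^ p) ((1 + c * x ^ (-(1/p))) ^ (p-1)) x := by
    intro x hx
    rw [interior_Ici] at hx
    have hx0 : (0:ℝ) < x := hx
    have h1 : HasDerivAt (fun x : ℝ => c + x ^ (1/p)) ((1/p) * x ^ (1/p - 1)) x := by
      simpa using ((Real.hasDerivAt_rpow_const (p := 1/p) (Or.inl hx0.ne'))).const_add c
    have hbase : 0 ≤ c + x ^ (1/p) := by positivity
    have h2 := h1.rpow_const (p := p) (Or.inr hp)
    convert h2 using 1
    rw [show 1/p * x ^ (1/p - 1 : ℝ) * p * (c + x ^ (1/p)) ^ (p-1)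
        = (c + x ^ (1/p)) ^ (p-1) * x ^ (1/p - 1) * (p * (1/p)) by ring,
      mul_one_div_cancel hp0.ne', mul_one]
    have e1 : x ^ (1/p - 1 : ℝ) = (x ^ (-(1/p) : ℝ)) ^ (p - 1 : ℝ) := by
      rw [← Real.rpow_mul hx0.le]
      congr 1
      field_simp
      ring
    rw [e1, ← Real.mul_rpow hbase (by positivity)]
    congr 1
    rw [add_mul, ← Real.rpow_add hx0]
    simp [add_comm]
  refine AntitoneOn.concaveOn_of_deriv (convex_Ici 0) ?_ ?_ ?_
  · have : Continuous (fun x : ℝ => (c + x ^ (1/p)) ^ p) := by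
      have c1 : Continuous (fun x : ℝ => c + x ^ (1/p)) :=
        continuous_const.add (Real.continuous_rpow_const (by positivity))
      exact (Real.continuous_rpow_const hp0.le).comp c1
    exact this.continuousOn
  · intro x hx
    exact (hderiv x hx).differentiableAt.differentiableWithinAt
  · intro x hx y hy hxy
    rw [(hderiv x hx).deriv, (hderiv y hy).deriv]
    rw [interior_Ici] at hx hy
    have hx0 : (0:ℝ) < x := hx
    have hy0 : (0:ℝ) < y := hy
    have hb : (0:ℝ) ≤ 1 + c * y ^ (-(1/p)) :=
      add_nonneg zero_le_one (mul_nonneg hc (Real.rpow_nonneg hy0.le _))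
    refine Real.rpow_le_rpow hb ?_ (by linarith)
    have : y ^ (-(1/p) : ℝ) ≤ x ^ (-(1/p) : ℝ) :=
      Real.rpow_le_rpow_of_nonpos hx0 hxy (neg_nonpos.mpr (by positivity))
    nlinarith [mul_le_mul_of_nonneg_left this hc]

/-- For any real numbers `a, b ≥ 0` and `p ≥ 1`, the function
`f(x) = (a + x^{1/p})^{p/2} * (b + x^{1/p})^{p/2}` is concave on `[0,∞)`. -/
theorem concave_lp_hadamard (a b p : ℝ) (ha : 0 ≤ a) (hb : 0 ≤ b) (hp : 1 ≤ p) :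
    ConcaveOn ℝ (Set.Ici (0 : ℝ))
      (fun x : ℝ => (a + x ^ (1 / p)) ^ (p / 2) * (b + x ^ (1 / p)) ^ (p / 2)) := by
  have hA := base_concave a p ha hp
  have hB := base_concave b p hb hp
  have hA0 : ∀ x ∈ Set.Ici (0:ℝ), 0 ≤ (a + x ^ (1/p)) ^ p := by
    intro x hx
    have : (0:ℝ) ≤ x := hx
    positivity
  have hB0 : ∀ x ∈ Set.Ici (0:ℝ), 0 ≤ (b + x ^ (1/p)) ^ p := by
    intro x hx
    have : (0:ℝ) ≤ x := hx
    positivity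
  refine (sqrtMulConcave hA hB hA0 hB0).congr ?_
  intro x hx
  have hx0 : (0:ℝ) ≤ x := hx
  have hxp : (0:ℝ) ≤ x ^ (1/p) := Real.rpow_nonneg hx0 _
  simp only
  rw [Real.sqrt_eq_rpow, Real.sqrt_eq_rpow, ← Real.rpow_mul (by linarith),
    ← Real.rpow_mul (by linarith)]
  simp only [mul_one_div]
end
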